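/- arXiv:2102.07491 — 9 statements merged into one kernel-verified Lean document; each statement's English description precedes it below -/
import Mathlib

section
/- Existence of a hedonic equilibrium (Theorem 2(i)): there exist a price vector p : Z → ℝ and functions μˢ : X → Z → ℝ, μᵈ : Z → Y → ℝ such that (p, μˢ, μᵈ) is a hedonic equilibrium. -/
/-!
Any minimiser of the dual objective `D p = ∑ x, n x * u x + ∑ y, m y * v y` is an equilibrium
price. Minimisers exist because clamping prices to a large box never
increases `D`. At prices `p`, call a profile of individual plans optimal if every agent only uses
best options and participates fully when that is strictly profitable; these profiles form a compact
convex set. For each agent, a best option chosen lexicographically (first by payoff, then by the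
marginal payoff in a direction `q`) remains best for `p + ε q` with small `ε > 0`, so
`D (p + ε q) ≤ D p + ε ⟪excess supply of an optimal profile, q⟫`. If no optimal profile cleared the
market, Hahn–Banach would give a `q` making all these pairings negative, contradicting the
minimality of `D p`. An optimal profile that clears the market is an equilibrium.
-/

open Finset MeasureTheory Real

variable {X Y Z : Type*} [Fintype X] [Fintype Y] [Fintype Z]
  [Nonempty X] [Nonempty Y] [Nonempty Z]

/-- A pair of supply/demand functions is a feasible flow. -/
def FeasibleFlow (n : X → ℝ) (m : Y → ℝ) (μs : X → Z → ℝ) (μd : Z → Y → ℝ) : Prop :=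
  (∀ x z, 0 ≤ μs x z) ∧ (∀ z y, 0 ≤ μd z y) ∧
    (∀ x, ∑ z, μs x z ≤ n x) ∧ (∀ y, ∑ z, μd z y ≤ m y) ∧
    (∀ z, ∑ x, μs x z = ∑ y, μd z y)

/-- Indirect utility of a producer of type `x` facing prices `p`. -/
noncomputable def indirectU (α : X → Z → ℝ) (p : Z → ℝ) (x : X) : ℝ :=
  max (univ.sup' univ_nonempty fun z => α x z + p z) 0

/-- Indirect utility of a consumer of type `y` facing prices `p`. -/
noncomputable def indirectV (γ : Z → Y → ℝ) (p : Z → ℝ) (y : Y) : ℝ :=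
  max (univ.sup' univ_nonempty fun z => γ z y - p z) 0

/-- A triple `(p, μs, μd)` is a hedonic equilibrium. -/
def HedonicEquilibrium (n : X → ℝ) (m : Y → ℝ) (α : X → Z → ℝ) (γ : Z → Y → ℝ)
    (p : Z → ℝ) (μs : X → Z → ℝ) (μd : Z → Y → ℝ) : Prop :=
  FeasibleFlow n m μs μd ∧
    (∀ x z, 0 < μs x z → α x z + p z = indirectU α p x) ∧
    (∀ z y, 0 < μd z y → γ z y - p z = indirectV γ p y) ∧
    (∀ x, 0 < indirectU α p x → ∑ z, μs x z = n x) ∧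
    (∀ y, 0 < indirectV γ p y → ∑ z, μd z y = m y)

/-- Primal (social welfare) objective of a flow. -/
def primalObj (α : X → Z → ℝ) (γ : Z → Y → ℝ) (μs : X → Z → ℝ) (μd : Z → Y → ℝ) : ℝ :=
  (∑ x, ∑ z, μs x z * α x z) + ∑ z, ∑ y, μd z y * γ z y

/-- Dual feasibility of surpluses and prices. -/
def DualFeasible (α : X → Z → ℝ) (γ : Z → Y → ℝ) (u : X → ℝ) (v : Y → ℝ) (p : Z → ℝ) : Prop :=
  (∀ x, 0 ≤ u x) ∧ (∀ y, 0 ≤ v y) ∧ (∀ x z, α x z + p z ≤ u x) ∧ (∀ z y, γ z y - p z ≤ v y)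

/-- Dual objective. -/
def dualObj (n : X → ℝ) (m : Y → ℝ) (u : X → ℝ) (v : Y → ℝ) : ℝ :=
  (∑ x, n x * u x) + ∑ y, m y * v y


open Filter Topology

theorem eventually_add_mul_le_of_toLex_le {ι : Type*} [Finite ι] {a b : ι → ℝ} {k₀ : ι}
    (h : ∀ k, toLex (a k, b k) ≤ toLex (a k₀, b k₀)) :
    ∀ᶠ ε in 𝓝[>] (0 : ℝ), ∀ k, a k + ε * b k ≤ a k₀ + ε * b k₀ := by
  refine eventually_all.2 fun k => ?_
  rcases Prod.Lex.toLex_le_toLex.1 (h k) with hlt | ⟨heq, hle⟩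
  · have hnear : ∀ᶠ ε in 𝓝 (0 : ℝ), a k + ε * b k < a k₀ + ε * b k₀ :=
      ContinuousAt.eventually_lt (by fun_prop) (by fun_prop) (by simpa using hlt)
    filter_upwards [nhdsWithin_le_nhds hnear] with ε hε using hε.le
  · filter_upwards [self_mem_nhdsWithin] with ε (hε : 0 < ε)
    simp only at heq hle
    rw [heq]
    gcongr

section Agent

variable {Z : Type*} [Fintype Z] [Nonempty Z]

noncomputable def bestValue (v : Z → ℝ) : ℝ :=
  max (univ.sup' univ_nonempty v) 0

theorem le_bestValue (v : Z → ℝ) (z : Z) : v z ≤ bestValue v :=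
  (le_sup' v (mem_univ z)).trans (le_max_left _ _)

theorem bestValue_nonneg (v : Z → ℝ) : 0 ≤ bestValue v :=
  le_max_right _ _

theorem bestValue_le {v : Z → ℝ} {t : ℝ} (h : ∀ z, v z ≤ t) (ht : 0 ≤ t) : bestValue v ≤ t :=
  max_le (sup'_le _ _ fun z _ => h z) ht

theorem continuous_bestValue : Continuous (bestValue : (Z → ℝ) → ℝ) :=
  (Continuous.finset_sup'_apply univ_nonempty fun z _ => continuous_apply z).max continuous_const

def optimalPlans (N : ℝ) (v : Z → ℝ) : Set (Z → ℝ) :=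
  {ρ | (∀ z, 0 ≤ ρ z) ∧ ∑ z, ρ z ≤ N ∧ (∀ z, v z < bestValue v → ρ z = 0) ∧
    (0 < bestValue v → ∑ z, ρ z = N)}

theorem eq_bestValue_of_mem_optimalPlans {N : ℝ} {v ρ : Z → ℝ} (hρ : ρ ∈ optimalPlans N v)
    {z : Z} (hz : 0 < ρ z) : v z = bestValue v := by
  by_contra hne
  exact hz.ne' (hρ.2.2.1 z ((le_bestValue v z).lt_of_ne hne))

theorem convex_optimalPlans (N : ℝ) (v : Z → ℝ) : Convex ℝ (optimalPlans N v) := by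
  rintro ρ ⟨hρ₀, hρN, hρv, hρfull⟩ ρ' ⟨hρ'₀, hρ'N, hρ'v, hρ'full⟩ a b ha hb hab
  have hsum : ∑ z, (a • ρ + b • ρ') z = a * ∑ z, ρ z + b * ∑ z, ρ' z := by
    simp only [Pi.add_apply, Pi.smul_apply, smul_eq_mul, sum_add_distrib, mul_sum]
  refine ⟨fun z => ?_, ?_, fun z hz => ?_, fun hv => ?_⟩
  · exact add_nonneg (mul_nonneg ha (hρ₀ z)) (mul_nonneg hb (hρ'₀ z))
  · calc ∑ z, (a • ρ + b • ρ') z = a * ∑ z, ρ z + b * ∑ z, ρ' z := hsum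
      _ ≤ a * N + b * N := by gcongr
      _ = N := by rw [← add_mul, hab, one_mul]
  · simp [hρv z hz, hρ'v z hz]
  · rw [hsum, hρfull hv, hρ'full hv, ← add_mul, hab, one_mul]

theorem isClosed_optimalPlans (N : ℝ) (v : Z → ℝ) : IsClosed (optimalPlans N v) := by
  have hsum : Continuous fun ρ : Z → ℝ => ∑ z, ρ z :=
    continuous_finsetSum _ fun z _ => continuous_apply z
  simp only [optimalPlans, Set.ofPred_and, Set.ofPred_forall]
  exact (isClosed_iInter fun z => isClosed_le continuous_const (continuous_apply z)).inter
    ((isClosed_le hsum continuous_const).inter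
    ((isClosed_iInter fun z => isClosed_iInter fun _ =>
      isClosed_eq (continuous_apply z) continuous_const).inter
    (isClosed_iInter fun _ => isClosed_eq hsum continuous_const)))

theorem isCompact_optimalPlans (N : ℝ) (v : Z → ℝ) : IsCompact (optimalPlans N v) := by
  have hbox : optimalPlans N v ⊆ Set.Icc 0 fun _ => N := fun ρ hρ => ⟨hρ.1, fun z =>
    (single_le_sum (fun z _ => hρ.1 z) (mem_univ z)).trans hρ.2.1⟩
  exact isCompact_Icc.of_isClosed_subset (isClosed_optimalPlans N v) hbox

theorem exists_mem_optimalPlans_bestValue_add_mul_le {N : ℝ} (hN : 0 ≤ N) (v w : Z → ℝ) :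
    ∃ ρ ∈ optimalPlans N v, ∀ᶠ ε in 𝓝[>] (0 : ℝ),
      N * bestValue (fun z => v z + ε * w z) ≤ N * bestValue v + ε * ∑ z, ρ z * w z := by
  classical
  -- `none` is the outside option; `k₀` is a best option, ties broken by the marginal change `w`.
  obtain ⟨k₀, hk₀⟩ := Finite.exists_max fun k : Option Z => toLex (k.elim 0 v, k.elim 0 w)
  have hbest : ∀ k : Option Z, k.elim 0 v ≤ k₀.elim 0 v := fun k =>
    (Prod.Lex.toLex_le_toLex.1 (hk₀ k)).elim le_of_lt fun h => h.1.le
  have hperturbed : ∀ᶠ ε in 𝓝[>] (0 : ℝ),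
      bestValue (fun z => v z + ε * w z) ≤ k₀.elim 0 v + ε * k₀.elim 0 w := by
    filter_upwards [eventually_add_mul_le_of_toLex_le hk₀] with ε hε
    exact bestValue_le (fun z => hε (some z)) (by simpa using hε none)
  rcases k₀ with _ | z₀
  · have hv : bestValue v = 0 :=
      le_antisymm (bestValue_le (fun z => hbest (some z)) le_rfl) (bestValue_nonneg v)
    refine ⟨0, ⟨fun _ => le_rfl, by simpa using hN, fun _ _ => rfl, fun h => (h.ne' hv).elim⟩, ?_⟩
    filter_upwards [hperturbed] with ε hε
    simp only [Option.elim_none, mul_zero, add_zero] at hε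
    simpa [hv] using mul_nonpos_of_nonneg_of_nonpos hN hε
  · have hv : bestValue v = v z₀ :=
      le_antisymm (bestValue_le (fun z => hbest (some z)) (hbest none)) (le_bestValue v z₀)
    refine ⟨Pi.single z₀ N, ⟨fun z => ?_, by simp, fun z hz => ?_, fun _ => by simp⟩, ?_⟩
    · by_cases hz : z = z₀ <;> simp [hz, hN]
    · have hz₀ : z ≠ z₀ := by rintro rfl; exact hz.ne hv.symm
      simp [hz₀]
    · filter_upwards [hperturbed] with ε hε
      simp only [Option.elim_some] at hε
      simp only [hv, Pi.single_apply, ite_mul, zero_mul, sum_ite_eq', mem_univ, if_true]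
      linarith [mul_le_mul_of_nonneg_left hε hN]

end Agent

theorem exists_forall_sum_mul_neg_of_zero_notMem {ι : Type*} [Fintype ι] {K : Set (ι → ℝ)}
    (hconv : Convex ℝ K) (hclosed : IsClosed K) (h0 : 0 ∉ K) :
    ∃ q : ι → ℝ, ∀ w ∈ K, ∑ i, w i * q i < 0 := by
  classical
  obtain ⟨f, u, hfK, hu⟩ := geometric_hahn_banach_closed_point hconv hclosed h0
  refine ⟨fun i => f fun j => if i = j then 1 else 0, fun w hw => ?_⟩
  have hf : f w = ∑ i, w i * f fun j => if i = j then 1 else 0 :=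
    (f : (ι → ℝ) →ₗ[ℝ] ℝ).pi_apply_eq_sum_univ w
  rw [← hf]
  exact (hfK w hw).trans (by simpa using hu)

section Market

variable {X Y Z : Type*}

-- Demand plans are indexed by the consumer first, the transpose of `μd`.
def optimalProfiles [Fintype Z] [Nonempty Z] (n : X → ℝ) (m : Y → ℝ) (α : X → Z → ℝ)
    (γ : Z → Y → ℝ) (p : Z → ℝ) : Set ((X → Z → ℝ) × (Y → Z → ℝ)) :=
  (Set.univ.pi fun x => optimalPlans (n x) fun z => α x z + p z) ×ˢ
    (Set.univ.pi fun y => optimalPlans (m y) fun z => γ z y - p z)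

theorem convex_optimalProfiles [Fintype Z] [Nonempty Z] (n : X → ℝ) (m : Y → ℝ)
    (α : X → Z → ℝ) (γ : Z → Y → ℝ) (p : Z → ℝ) : Convex ℝ (optimalProfiles n m α γ p) :=
  (convex_pi fun _ _ => convex_optimalPlans _ _).prod (convex_pi fun _ _ => convex_optimalPlans _ _)

theorem isCompact_optimalProfiles [Fintype Z] [Nonempty Z] (n : X → ℝ) (m : Y → ℝ)
    (α : X → Z → ℝ) (γ : Z → Y → ℝ) (p : Z → ℝ) : IsCompact (optimalProfiles n m α γ p) :=
  (isCompact_univ_pi fun _ => isCompact_optimalPlans _ _).prod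
    (isCompact_univ_pi fun _ => isCompact_optimalPlans _ _)

def excessSupply [Fintype X] [Fintype Y] : ((X → Z → ℝ) × (Y → Z → ℝ)) →ₗ[ℝ] (Z → ℝ) :=
  (∑ x, LinearMap.proj x) ∘ₗ LinearMap.fst ℝ _ _ - (∑ y, LinearMap.proj y) ∘ₗ LinearMap.snd ℝ _ _

theorem excessSupply_apply [Fintype X] [Fintype Y] (μ : (X → Z → ℝ) × (Y → Z → ℝ)) (z : Z) :
    excessSupply μ z = ∑ x, μ.1 x z - ∑ y, μ.2 y z := by
  simp [excessSupply]

theorem sum_excessSupply_mul [Fintype X] [Fintype Y] [Fintype Z] (μ : (X → Z → ℝ) × (Y → Z → ℝ))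
    (q : Z → ℝ) :
    ∑ z, excessSupply μ z * q z = ∑ x, ∑ z, μ.1 x z * q z - ∑ y, ∑ z, μ.2 y z * q z := by
  simp only [excessSupply_apply, sub_mul, sum_sub_distrib, sum_mul]
  rw [sum_comm, sum_comm (f := fun z y => μ.2 y z * q z)]

end Market

section Equilibrium

variable {X Y Z : Type*} [Fintype X] [Fintype Y] [Fintype Z] [Nonempty Z]

theorem continuous_dualObj_indirect (n : X → ℝ) (m : Y → ℝ) (α : X → Z → ℝ) (γ : Z → Y → ℝ) :
    Continuous fun p => dualObj n m (indirectU α p) (indirectV γ p) := by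
  refine .add (continuous_finsetSum _ fun x _ => continuous_const.mul ?_)
    (continuous_finsetSum _ fun y _ => continuous_const.mul ?_)
  · exact continuous_bestValue.comp (by fun_prop : Continuous fun (p : Z → ℝ) z => α x z + p z)
  · exact continuous_bestValue.comp (by fun_prop : Continuous fun (p : Z → ℝ) z => γ z y - p z)

theorem exists_forall_dualObj_le {n : X → ℝ} {m : Y → ℝ} (hn : ∀ x, 0 ≤ n x) (hm : ∀ y, 0 ≤ m y)
    (α : X → Z → ℝ) (γ : Z → Y → ℝ) :
    ∃ p, ∀ p', dualObj n m (indirectU α p) (indirectV γ p) ≤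
      dualObj n m (indirectU α p') (indirectV γ p') := by
  obtain ⟨Cα, hCα⟩ := Finite.exists_le fun xz : X × Z => α xz.1 xz.2
  obtain ⟨Cγ, hCγ⟩ := Finite.exists_le fun zy : Z × Y => γ zy.1 zy.2
  set C := max (max Cα Cγ) 0
  have hαC : ∀ x z, α x z ≤ C := fun x z =>
    (hCα (x, z)).trans ((le_max_left _ _).trans (le_max_left _ _))
  have hγC : ∀ z y, γ z y ≤ C := fun z y =>
    (hCγ (z, y)).trans ((le_max_right _ _).trans (le_max_left _ _))
  set clamp : ℝ → ℝ := fun t => max (-C) (min C t)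
  have hclamp_add : ∀ a t, a ≤ C → a + clamp t ≤ max (a + t) 0 := by
    intro a t ha
    simp only [clamp, max_def, min_def]
    split_ifs <;> linarith
  have hclamp_sub : ∀ g t, g ≤ C → g - clamp t ≤ max (g - t) 0 := by
    intro g t hg
    simp only [clamp, max_def, min_def]
    split_ifs <;> linarith
  have hbox : ∀ p : Z → ℝ, (fun z => clamp (p z)) ∈ Set.Icc (fun _ => -C) (fun _ => C) :=
    fun p => ⟨fun z => le_max_left _ _, fun z => max_le (by linarith [le_max_right (max Cα Cγ) 0])
      (min_le_left _ _)⟩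
  obtain ⟨p₀, -, hp₀⟩ := isCompact_Icc.exists_isMinOn ⟨_, hbox 0⟩
    (continuous_dualObj_indirect n m α γ).continuousOn
  refine ⟨p₀, fun p => (hp₀ (hbox p)).trans ?_⟩
  refine add_le_add (sum_le_sum fun x _ => mul_le_mul_of_nonneg_left ?_ (hn x))
    (sum_le_sum fun y _ => mul_le_mul_of_nonneg_left ?_ (hm y))
  · refine bestValue_le (fun z => (hclamp_add _ _ (hαC x z)).trans ?_) (bestValue_nonneg _)
    exact max_le (le_bestValue (fun z => α x z + p z) z) (bestValue_nonneg _)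
  · refine bestValue_le (fun z => (hclamp_sub _ _ (hγC z y)).trans ?_) (bestValue_nonneg _)
    exact max_le (le_bestValue (fun z => γ z y - p z) z) (bestValue_nonneg _)

theorem exists_mem_optimalProfiles_excessSupply_eq_zero {n : X → ℝ} {m : Y → ℝ}
    (hn : ∀ x, 0 ≤ n x) (hm : ∀ y, 0 ≤ m y) {α : X → Z → ℝ} {γ : Z → Y → ℝ} {p : Z → ℝ}
    (hp : ∀ p', dualObj n m (indirectU α p) (indirectV γ p) ≤
      dualObj n m (indirectU α p') (indirectV γ p')) :
    ∃ μ ∈ optimalProfiles n m α γ p, excessSupply μ = 0 := by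
  by_contra! hclear
  obtain ⟨q, hq⟩ := exists_forall_sum_mul_neg_of_zero_notMem
    ((convex_optimalProfiles n m α γ p).linear_image excessSupply)
    ((isCompact_optimalProfiles n m α γ p).image
      excessSupply.continuous_of_finiteDimensional).isClosed
    (fun ⟨μ, hμ, h0⟩ => hclear μ hμ h0)
  choose ρs hρs hs using fun x =>
    exists_mem_optimalPlans_bestValue_add_mul_le (hn x) (fun z => α x z + p z) q
  choose ρd hρd hd using fun y =>
    exists_mem_optimalPlans_bestValue_add_mul_le (hm y) (fun z => γ z y - p z) (-q)
  have hneg := hq _ ⟨(ρs, ρd), ⟨fun x _ => hρs x, fun y _ => hρd y⟩, rfl⟩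
  rw [sum_excessSupply_mul] at hneg
  obtain ⟨ε, hsε, hdε, hε⟩ :=
    ((eventually_all.2 hs).and ((eventually_all.2 hd).and self_mem_nhdsWithin)).exists
  refine (hp (p + ε • q)).not_gt ?_
  calc dualObj n m (indirectU α (p + ε • q)) (indirectV γ (p + ε • q))
      = ∑ x, n x * bestValue (fun z => (α x z + p z) + ε * q z) +
          ∑ y, m y * bestValue (fun z => (γ z y - p z) + ε * (-q) z) := by
        simp only [dualObj, indirectU, indirectV, bestValue, Pi.add_apply, Pi.smul_apply,
          Pi.neg_apply, smul_eq_mul, add_assoc, mul_neg, ← sub_eq_add_neg, sub_add_eq_sub_sub]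
    _ ≤ ∑ x, (n x * indirectU α p x + ε * ∑ z, ρs x z * q z) +
          ∑ y, (m y * indirectV γ p y + ε * ∑ z, ρd y z * (-q) z) :=
        add_le_add (sum_le_sum fun x _ => hsε x) (sum_le_sum fun y _ => hdε y)
    _ = dualObj n m (indirectU α p) (indirectV γ p) +
          ε * (∑ x, ∑ z, ρs x z * q z - ∑ y, ∑ z, ρd y z * q z) := by
        simp only [dualObj, sum_add_distrib, ← mul_sum, Pi.neg_apply, mul_neg, sum_neg_distrib]
        ring
    _ < dualObj n m (indirectU α p) (indirectV γ p) := by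
        linarith [mul_neg_of_pos_of_neg hε hneg]

theorem hedonicEquilibrium_of_mem_optimalProfiles {n : X → ℝ} {m : Y → ℝ} {α : X → Z → ℝ}
    {γ : Z → Y → ℝ} {p : Z → ℝ} {μ : (X → Z → ℝ) × (Y → Z → ℝ)}
    (hμ : μ ∈ optimalProfiles n m α γ p) (hclear : excessSupply μ = 0) :
    HedonicEquilibrium n m α γ p μ.1 fun z y => μ.2 y z := by
  obtain ⟨hs, hd⟩ := hμ
  refine ⟨⟨fun x z => (hs x trivial).1 z, fun z y => (hd y trivial).1 z,
      fun x => (hs x trivial).2.1, fun y => (hd y trivial).2.1, fun z => ?_⟩,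
    fun x z hz => eq_bestValue_of_mem_optimalPlans (hs x trivial) hz,
    fun z y hz => eq_bestValue_of_mem_optimalPlans (hd y trivial) hz,
    fun x hx => (hs x trivial).2.2.2 hx, fun y hy => (hd y trivial).2.2.2 hy⟩
  rw [← sub_eq_zero, ← excessSupply_apply, hclear, Pi.zero_apply]

end Equilibrium

/-- Theorem 2(i): existence of a hedonic equilibrium. -/
theorem hedonic_equilibrium_exists (n : X → ℝ) (m : Y → ℝ)
    (hn : ∀ x, 0 ≤ n x) (hm : ∀ y, 0 ≤ m y) (α : X → Z → ℝ) (γ : Z → Y → ℝ) :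
    ∃ (p : Z → ℝ) (μs : X → Z → ℝ) (μd : Z → Y → ℝ),
      HedonicEquilibrium n m α γ p μs μd := by
  obtain ⟨p, hp⟩ := exists_forall_dualObj_le hn hm α γ
  obtain ⟨μ, hμ, hclear⟩ := exists_mem_optimalProfiles_excessSupply_eq_zero hn hm hp
  exact ⟨p, μ.1, _, hedonicEquilibrium_of_mem_optimalProfiles hμ hclear⟩
end

section
/- First welfare theorem direction of Theorem 2(ii): if (p, μˢ, μᵈ) is a hedonic equilibrium, then (μˢ, μᵈ) maximizes the primal objective ∑_{x,z} μˢ x z · α x z + ∑_{z,y} μᵈ z y · γ z y among all feasible flows. -/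
open Finset MeasureTheory Real

variable {X Y Z : Type*} [Fintype X] [Fintype Y] [Fintype Z]
  [Nonempty X] [Nonempty Y] [Nonempty Z]

/-!
Linear-programming duality. The equilibrium surpluses `u = indirectU α p`, `v = indirectV γ p`
together with the prices `p` are feasible for the dual program, so by weak duality every feasible
flow has primal value at most `dualObj n m u v`. Rationality and full participation are exactly the
complementary slackness conditions, so the equilibrium flow attains that bound.
-/

theorem mul_eq_zero_of_nonneg_of_pos_imp {R : Type*} [MulZeroClass R] [PartialOrder R] {a b : R}
    (ha : 0 ≤ a) (h : 0 < a → b = 0) : a * b = 0 := by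
  rcases ha.eq_or_lt with ha | ha
  · rw [← ha, zero_mul]
  · rw [h ha, mul_zero]

section IndirectUtility

variable {X Y Z : Type*} [Fintype Z] [Nonempty Z] (α : X → Z → ℝ) (γ : Z → Y → ℝ) (p : Z → ℝ)

theorem indirectU_nonneg (x : X) : 0 ≤ indirectU α p x :=
  le_max_right _ _

theorem indirectV_nonneg (y : Y) : 0 ≤ indirectV γ p y :=
  le_max_right _ _

theorem le_indirectU (x : X) (z : Z) : α x z + p z ≤ indirectU α p x :=
  (le_sup' (fun z => α x z + p z) (mem_univ z)).trans (le_max_left _ _)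

theorem le_indirectV (z : Z) (y : Y) : γ z y - p z ≤ indirectV γ p y :=
  (le_sup' (fun z => γ z y - p z) (mem_univ z)).trans (le_max_left _ _)

theorem dualFeasible_indirect : DualFeasible α γ (indirectU α p) (indirectV γ p) p :=
  ⟨indirectU_nonneg α p, indirectV_nonneg γ p, le_indirectU α p, le_indirectV γ p⟩

end IndirectUtility

section Duality

variable {X Y Z : Type*} [Fintype X] [Fintype Y] [Fintype Z]
  {n : X → ℝ} {m : Y → ℝ} {α : X → Z → ℝ} {γ : Z → Y → ℝ} {u : X → ℝ} {v : Y → ℝ}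
  {p : Z → ℝ} {μs : X → Z → ℝ} {μd : Z → Y → ℝ}

theorem dualObj_sub_primalObj (hclear : ∀ z, ∑ x, μs x z = ∑ y, μd z y) :
    dualObj n m u v - primalObj α γ μs μd =
      (∑ x, u x * (n x - ∑ z, μs x z)) + (∑ y, v y * (m y - ∑ z, μd z y)) +
        (∑ x, ∑ z, μs x z * (u x - (α x z + p z))) +
          ∑ z, ∑ y, μd z y * (v y - (γ z y - p z)) := by
  -- market clearing: what producers receive is what consumers pay
  have hprice : ∑ x, ∑ z, μs x z * p z = ∑ z, ∑ y, μd z y * p z := by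
    rw [sum_comm]
    exact sum_congr rfl fun z _ => by rw [← sum_mul, hclear z, sum_mul]
  have hdemand : ∑ y, v y * ∑ z, μd z y = ∑ z, ∑ y, μd z y * v y := by
    rw [sum_comm]
    exact sum_congr rfl fun y _ => by rw [mul_sum]; exact sum_congr rfl fun z _ => mul_comm _ _
  have hsupply : ∑ x, u x * ∑ z, μs x z = ∑ x, ∑ z, μs x z * u x :=
    sum_congr rfl fun x _ => by rw [mul_sum]; exact sum_congr rfl fun z _ => mul_comm _ _
  simp only [dualObj, primalObj, mul_sub, mul_add, sum_sub_distrib, sum_add_distrib]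
  rw [hprice, hdemand, hsupply]
  simp only [mul_comm (n _), mul_comm (m _)]
  ring

theorem primalObj_le_dualObj (hflow : FeasibleFlow n m μs μd) (hdual : DualFeasible α γ u v p) :
    primalObj α γ μs μd ≤ dualObj n m u v := by
  obtain ⟨hs0, hd0, hsn, hdm, hclear⟩ := hflow
  obtain ⟨hu0, hv0, hua, hvg⟩ := hdual
  rw [← sub_nonneg, dualObj_sub_primalObj (p := p) hclear]
  refine add_nonneg (add_nonneg (add_nonneg ?_ ?_) ?_) ?_
  · exact sum_nonneg fun x _ => mul_nonneg (hu0 x) (sub_nonneg.2 (hsn x))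
  · exact sum_nonneg fun y _ => mul_nonneg (hv0 y) (sub_nonneg.2 (hdm y))
  · exact sum_nonneg fun x _ => sum_nonneg fun z _ => mul_nonneg (hs0 x z) (sub_nonneg.2 (hua x z))
  · exact sum_nonneg fun z _ => sum_nonneg fun y _ => mul_nonneg (hd0 z y) (sub_nonneg.2 (hvg z y))

theorem primalObj_eq_dualObj_of_hedonicEquilibrium [Nonempty Z]
    (heq : HedonicEquilibrium n m α γ p μs μd) :
    primalObj α γ μs μd = dualObj n m (indirectU α p) (indirectV γ p) := by
  obtain ⟨⟨hs0, hd0, -, -, hclear⟩, hrs, hrd, hpu, hpv⟩ := heq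
  have hsupply : ∑ x, indirectU α p x * (n x - ∑ z, μs x z) = 0 :=
    sum_eq_zero fun x _ => mul_eq_zero_of_nonneg_of_pos_imp (indirectU_nonneg α p x)
      fun hu => by rw [hpu x hu, sub_self]
  have hdemand : ∑ y, indirectV γ p y * (m y - ∑ z, μd z y) = 0 :=
    sum_eq_zero fun y _ => mul_eq_zero_of_nonneg_of_pos_imp (indirectV_nonneg γ p y)
      fun hv => by rw [hpv y hv, sub_self]
  have hproducers : ∑ x, ∑ z, μs x z * (indirectU α p x - (α x z + p z)) = 0 :=
    sum_eq_zero fun x _ => sum_eq_zero fun z _ => mul_eq_zero_of_nonneg_of_pos_imp (hs0 x z)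
      fun hμ => by rw [hrs x z hμ, sub_self]
  have hconsumers : ∑ z, ∑ y, μd z y * (indirectV γ p y - (γ z y - p z)) = 0 :=
    sum_eq_zero fun z _ => sum_eq_zero fun y _ => mul_eq_zero_of_nonneg_of_pos_imp (hd0 z y)
      fun hμ => by rw [hrd z y hμ, sub_self]
  rw [eq_comm, ← sub_eq_zero, dualObj_sub_primalObj (p := p) hclear, hsupply, hdemand, hproducers,
    hconsumers]
  simp only [add_zero]

end Duality

theorem equilibrium_maximizes_primal_general (n : X → ℝ) (m : Y → ℝ)
    (α : X → Z → ℝ) (γ : Z → Y → ℝ)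
    (p : Z → ℝ) (μs : X → Z → ℝ) (μd : Z → Y → ℝ)
    (heq : HedonicEquilibrium n m α γ p μs μd) :
    ∀ (μs' : X → Z → ℝ) (μd' : Z → Y → ℝ), FeasibleFlow n m μs' μd' →
      primalObj α γ μs' μd' ≤ primalObj α γ μs μd := by
  intro μs' μd' hflow
  rw [primalObj_eq_dualObj_of_hedonicEquilibrium heq]
  exact primalObj_le_dualObj hflow (dualFeasible_indirect α γ p)

/-- Theorem 2(ii), first-welfare direction: an equilibrium flow maximizes the primal objective. -/
theorem equilibrium_maximizes_primal (n : X → ℝ) (m : Y → ℝ)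
    (hn : ∀ x, 0 ≤ n x) (hm : ∀ y, 0 ≤ m y) (α : X → Z → ℝ) (γ : Z → Y → ℝ)
    (p : Z → ℝ) (μs : X → Z → ℝ) (μd : Z → Y → ℝ)
    (heq : HedonicEquilibrium n m α γ p μs μd) :
    ∀ (μs' : X → Z → ℝ) (μd' : Z → Y → ℝ), FeasibleFlow n m μs' μd' →
      primalObj α γ μs' μd' ≤ primalObj α γ μs μd :=
  equilibrium_maximizes_primal_general n m α γ p μs μd heq
end

section
/- Reformulation of the dual program over prices only: the infimum of the dual objective ∑_x n x · u' x + ∑_y m y · v' y over all dual feasible triples (u', v', p') equals the infimum over all p : Z → ℝ of ∑_x n x · max(max_z (α x z + p z), 0) + ∑_y m y · max(max_z (γ z y − p z), 0). -/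
open Finset MeasureTheory Real

variable {X Y Z : Type*} [Fintype X] [Fintype Y] [Fintype Z]
  [Nonempty X] [Nonempty Y] [Nonempty Z]

omit [Fintype X] [Fintype Y] [Nonempty X] [Nonempty Y] in
theorem dualFeasible_indirectU_indirectV (α : X → Z → ℝ) (γ : Z → Y → ℝ) (p : Z → ℝ) :
    DualFeasible α γ (indirectU α p) (indirectV γ p) p :=
  ⟨fun _ => le_max_right _ _, fun _ => le_max_right _ _,
    fun x z => (le_sup' (fun z => α x z + p z) (mem_univ z)).trans (le_max_left _ _),
    fun z y => (le_sup' (fun z => γ z y - p z) (mem_univ z)).trans (le_max_left _ _)⟩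

namespace DualFeasible

omit [Fintype X] [Fintype Y] [Nonempty X] [Nonempty Y]

variable {α : X → Z → ℝ} {γ : Z → Y → ℝ} {u : X → ℝ} {v : Y → ℝ} {p : Z → ℝ}

theorem indirectU_le (h : DualFeasible α γ u v p) (x : X) : indirectU α p x ≤ u x :=
  max_le (sup'_le _ _ fun z _ => h.2.2.1 x z) (h.1 x)

theorem indirectV_le (h : DualFeasible α γ u v p) (y : Y) : indirectV γ p y ≤ v y :=
  max_le (sup'_le _ _ fun z _ => h.2.2.2 z y) (h.2.1 y)

end DualFeasible

omit [Nonempty X] [Nonempty Y] in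
theorem dualObj_mono {n : X → ℝ} {m : Y → ℝ} (hn : ∀ x, 0 ≤ n x) (hm : ∀ y, 0 ≤ m y)
    {u u' : X → ℝ} {v v' : Y → ℝ} (hu : ∀ x, u x ≤ u' x) (hv : ∀ y, v y ≤ v' y) :
    dualObj n m u v ≤ dualObj n m u' v' :=
  add_le_add (sum_le_sum fun x _ => mul_le_mul_of_nonneg_left (hu x) (hn x))
    (sum_le_sum fun y _ => mul_le_mul_of_nonneg_left (hv y) (hm y))

/- Every dual feasible `(u', v', p')` is dominated by `(indirectU α p', indirectV γ p', p')`, which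
is itself dual feasible; so the two sets of objective values have the same infimum, bounded or
not. -/
/-- The dual program can be reformulated as a minimization over prices only. -/
theorem dual_reformulation_over_prices (n : X → ℝ) (m : Y → ℝ)
    (hn : ∀ x, 0 ≤ n x) (hm : ∀ y, 0 ≤ m y) (α : X → Z → ℝ) (γ : Z → Y → ℝ) :
    sInf {d : ℝ | ∃ (u' : X → ℝ) (v' : Y → ℝ) (p' : Z → ℝ),
        DualFeasible α γ u' v' p' ∧ d = dualObj n m u' v'} =
      sInf {d : ℝ | ∃ p : Z → ℝ,
        d = (∑ x, n x * indirectU α p x) + ∑ y, m y * indirectV γ p y} := by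
  apply csInf_eq_csInf_of_forall_exists_le
  · rintro _ ⟨u, v, p, hfeas, rfl⟩
    exact ⟨_, ⟨p, rfl⟩, dualObj_mono hn hm hfeas.indirectU_le hfeas.indirectV_le⟩
  · rintro _ ⟨p, rfl⟩
    exact ⟨_, ⟨_, _, p, dualFeasible_indirectU_indirectV α γ p, rfl⟩, le_rfl⟩
end

section
/- Equivalence with the assignment game of Chiappori–McCann–Nesheim: the supremum of the primal objective ∑_{x,z} μˢ x z · α x z + ∑_{z,y} μᵈ z y · γ z y over all feasible flows (μˢ, μᵈ) equals the supremum of ∑_{x,y} ν x y · Φ x y over all ν : X → Y → ℝ with ν ≥ 0, ∑_y ν x y ≤ n x for all x, and ∑_x ν x y ≤ m y for all y, where Φ x y = max_z (α x z + γ z y) is the indirect matching surplus. -/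
open Finset MeasureTheory Real

variable {X Y Z : Type*} [Fintype X] [Fintype Y] [Fintype Z]
  [Nonempty X] [Nonempty Y] [Nonempty Z]

/-!
Both values are bounded through arrays `ρ ≥ 0` on `X × Z × Y`: the flow `(∑_y ρ, ∑_x ρ)` has
primal value `∑ ρ x z y (α x z + γ z y)`, which is at most `∑ ν Φ` for the matching `ν = ∑_z ρ`.
Every feasible flow arises this way, by gluing `μˢ` and `μᵈ` along their common `Z`-marginal,
and the bound is attained when `ρ` routes all of `ν x y` through a maximiser of
`α x z + γ z y`. So each value of either problem is dominated by a value of the other, and the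
suprema agree.
-/

section Coupling

omit [Nonempty X] [Nonempty Y] [Nonempty Z]

def supplyMarginal (ρ : X → Z → Y → ℝ) (x : X) (z : Z) : ℝ := ∑ y, ρ x z y

def demandMarginal (ρ : X → Z → Y → ℝ) (z : Z) (y : Y) : ℝ := ∑ x, ρ x z y

def matchingMarginal (ρ : X → Z → Y → ℝ) (x : X) (y : Y) : ℝ := ∑ z, ρ x z y

omit [Fintype X] in
lemma sum_matchingMarginal_eq_sum_supplyMarginal (ρ : X → Z → Y → ℝ) (x : X) :
    ∑ y, matchingMarginal ρ x y = ∑ z, supplyMarginal ρ x z :=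
  sum_comm

omit [Fintype Y] in
lemma sum_matchingMarginal_eq_sum_demandMarginal (ρ : X → Z → Y → ℝ) (y : Y) :
    ∑ x, matchingMarginal ρ x y = ∑ z, demandMarginal ρ z y :=
  sum_comm

lemma feasibleFlow_marginals {n : X → ℝ} {m : Y → ℝ} {ρ : X → Z → Y → ℝ}
    (hρ : ∀ x z y, 0 ≤ ρ x z y) (hn : ∀ x, ∑ y, matchingMarginal ρ x y ≤ n x)
    (hm : ∀ y, ∑ x, matchingMarginal ρ x y ≤ m y) :
    FeasibleFlow n m (supplyMarginal ρ) (demandMarginal ρ) :=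
  ⟨fun x z => sum_nonneg fun y _ => hρ x z y, fun z y => sum_nonneg fun x _ => hρ x z y,
    fun x => (sum_matchingMarginal_eq_sum_supplyMarginal ρ x).symm.trans_le (hn x),
    fun y => (sum_matchingMarginal_eq_sum_demandMarginal ρ y).symm.trans_le (hm y),
    fun _ => sum_comm⟩

lemma primalObj_marginals (α : X → Z → ℝ) (γ : Z → Y → ℝ) (ρ : X → Z → Y → ℝ) :
    primalObj α γ (supplyMarginal ρ) (demandMarginal ρ) =
      ∑ x, ∑ z, ∑ y, ρ x z y * (α x z + γ z y) := by
  simp only [primalObj, supplyMarginal, demandMarginal, sum_mul, mul_add,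
    sum_add_distrib]
  congr 1
  exact (sum_congr rfl fun _ _ => sum_comm).trans sum_comm

/-- Where the common `Z`-marginal `∑ x, μs x z` vanishes, so do the nonnegative `μs · z` and
`μd z ·`, so the junk value `a / 0 = 0` is harmless. -/
noncomputable def glue (μs : X → Z → ℝ) (μd : Z → Y → ℝ) (x : X) (z : Z) (y : Y) : ℝ :=
  μs x z * μd z y / ∑ x', μs x' z

section Glue

variable {μs : X → Z → ℝ} {μd : Z → Y → ℝ}

omit [Fintype Z] in
lemma supplyMarginal_glue (hs : ∀ x z, 0 ≤ μs x z) (hclear : ∀ z, ∑ x, μs x z = ∑ y, μd z y) :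
    supplyMarginal (glue μs μd) = μs := by
  ext x z
  rcases eq_or_ne (∑ x', μs x' z) 0 with hz | hz
  · simp [supplyMarginal, glue, hz, (sum_eq_zero_iff_of_nonneg fun x' _ => hs x' z).1 hz x]
  · simp only [supplyMarginal, glue]
    rw [← sum_div, ← mul_sum, ← hclear, mul_div_cancel_right₀ _ hz]

omit [Fintype Z] in
lemma demandMarginal_glue (hd : ∀ z y, 0 ≤ μd z y) (hclear : ∀ z, ∑ x, μs x z = ∑ y, μd z y) :
    demandMarginal (glue μs μd) = μd := by
  ext z y
  rcases eq_or_ne (∑ x', μs x' z) 0 with hz | hz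
  · have hz' : ∑ y', μd z y' = 0 := hclear z ▸ hz
    simp [demandMarginal, glue, hz, (sum_eq_zero_iff_of_nonneg fun y' _ => hd z y').1 hz' y]
  · simp only [demandMarginal, glue]
    rw [← sum_div, ← sum_mul, mul_div_cancel_left₀ _ hz]

end Glue

section GraphCoupling

variable [DecidableEq Z]

def graphCoupling (ν : X → Y → ℝ) (f : X → Y → Z) (x : X) (z : Z) (y : Y) : ℝ :=
  if f x y = z then ν x y else 0

variable {ν : X → Y → ℝ} (f : X → Y → Z)

omit [Fintype X] [Fintype Y] [Fintype Z] in
lemma graphCoupling_nonneg (hν : ∀ x y, 0 ≤ ν x y) (x : X) (z : Z) (y : Y) :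
    0 ≤ graphCoupling ν f x z y := by
  unfold graphCoupling
  split_ifs
  exacts [hν x y, le_rfl]

omit [Fintype X] [Fintype Y] in
lemma matchingMarginal_graphCoupling : matchingMarginal (graphCoupling ν f) = ν := by
  ext x y
  simp [matchingMarginal, graphCoupling]

lemma sum_graphCoupling_mul (g : X → Z → Y → ℝ) :
    ∑ x, ∑ z, ∑ y, graphCoupling ν f x z y * g x z y = ∑ x, ∑ y, ν x y * g x (f x y) y := by
  refine sum_congr rfl fun x _ => ?_
  rw [sum_comm]
  simp [graphCoupling]

end GraphCoupling

end Coupling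

section IndirectSurplus

omit [Nonempty X] [Nonempty Y]

noncomputable def indirectSurplus (α : X → Z → ℝ) (γ : Z → Y → ℝ) (x : X) (y : Y) : ℝ :=
  univ.sup' univ_nonempty fun z => α x z + γ z y

variable {n : X → ℝ} {m : Y → ℝ}

lemma sum_mul_le_sum_matchingMarginal_mul_indirectSurplus {α : X → Z → ℝ} {γ : Z → Y → ℝ}
    {ρ : X → Z → Y → ℝ} (hρ : ∀ x z y, 0 ≤ ρ x z y) :
    ∑ x, ∑ z, ∑ y, ρ x z y * (α x z + γ z y) ≤
      ∑ x, ∑ y, matchingMarginal ρ x y * indirectSurplus α γ x y := by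
  simp only [matchingMarginal, sum_mul]
  refine sum_le_sum fun x _ => ?_
  rw [sum_comm]
  gcongr with y _ z _
  · exact hρ x z y
  · exact le_sup' (fun z => α x z + γ z y) (mem_univ z)

lemma exists_matching_primalObj_le (α : X → Z → ℝ) (γ : Z → Y → ℝ) {μs : X → Z → ℝ}
    {μd : Z → Y → ℝ} (h : FeasibleFlow n m μs μd) :
    ∃ ν : X → Y → ℝ, (∀ x y, 0 ≤ ν x y) ∧ (∀ x, ∑ y, ν x y ≤ n x) ∧ (∀ y, ∑ x, ν x y ≤ m y) ∧
      primalObj α γ μs μd ≤ ∑ x, ∑ y, ν x y * indirectSurplus α γ x y := by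
  obtain ⟨hs, hd, hn, hm, hclear⟩ := h
  have hsupply := supplyMarginal_glue hs hclear
  have hdemand := demandMarginal_glue hd hclear
  have hglue : ∀ x z y, 0 ≤ glue μs μd x z y := fun x z y =>
    div_nonneg (mul_nonneg (hs x z) (hd z y)) (sum_nonneg fun x' _ => hs x' z)
  refine ⟨matchingMarginal (glue μs μd), fun x y => sum_nonneg fun z _ => hglue x z y,
    fun x => ?_, fun y => ?_, ?_⟩
  · rw [sum_matchingMarginal_eq_sum_supplyMarginal, hsupply]
    exact hn x
  · rw [sum_matchingMarginal_eq_sum_demandMarginal, hdemand]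
    exact hm y
  · calc primalObj α γ μs μd
        = primalObj α γ (supplyMarginal (glue μs μd)) (demandMarginal (glue μs μd)) := by
          rw [hsupply, hdemand]
      _ ≤ _ := (primalObj_marginals α γ _).trans_le
          (sum_mul_le_sum_matchingMarginal_mul_indirectSurplus hglue)

lemma exists_feasibleFlow_primalObj_eq (α : X → Z → ℝ) (γ : Z → Y → ℝ) {ν : X → Y → ℝ}
    (hν : ∀ x y, 0 ≤ ν x y) (hn : ∀ x, ∑ y, ν x y ≤ n x) (hm : ∀ y, ∑ x, ν x y ≤ m y) :
    ∃ (μs : X → Z → ℝ) (μd : Z → Y → ℝ), FeasibleFlow n m μs μd ∧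
      primalObj α γ μs μd = ∑ x, ∑ y, ν x y * indirectSurplus α γ x y := by
  classical
  choose f _ hf using fun x y => exists_mem_eq_sup' univ_nonempty fun z => α x z + γ z y
  have hν' := matchingMarginal_graphCoupling (ν := ν) f
  refine ⟨supplyMarginal (graphCoupling ν f), demandMarginal (graphCoupling ν f),
    feasibleFlow_marginals (graphCoupling_nonneg f hν) (by rwa [hν']) (by rwa [hν']), ?_⟩
  rw [primalObj_marginals, sum_graphCoupling_mul]
  simp only [indirectSurplus, hf]

end IndirectSurplus

theorem hedonic_matching_equivalence_general (n : X → ℝ) (m : Y → ℝ)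
    (α : X → Z → ℝ) (γ : Z → Y → ℝ) :
    sSup {s : ℝ | ∃ (μs : X → Z → ℝ) (μd : Z → Y → ℝ),
        FeasibleFlow n m μs μd ∧ s = primalObj α γ μs μd} =
      sSup {s : ℝ | ∃ ν : X → Y → ℝ, (∀ x y, 0 ≤ ν x y) ∧
        (∀ x, ∑ y, ν x y ≤ n x) ∧ (∀ y, ∑ x, ν x y ≤ m y) ∧
        s = ∑ x, ∑ y, ν x y * univ.sup' univ_nonempty (fun z => α x z + γ z y)} := by
  apply csSup_eq_csSup_of_forall_exists_le
  · rintro _ ⟨μs, μd, hflow, rfl⟩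
    obtain ⟨ν, hν, hn, hm, hle⟩ := exists_matching_primalObj_le α γ hflow
    exact ⟨_, ⟨ν, hν, hn, hm, rfl⟩, hle⟩
  · rintro _ ⟨ν, hν, hn, hm, rfl⟩
    obtain ⟨μs, μd, hflow, heq⟩ := exists_feasibleFlow_primalObj_eq α γ hν hn hm
    exact ⟨_, ⟨μs, μd, hflow, rfl⟩, heq.ge⟩

/-- Equivalence with the assignment game of Chiappori–McCann–Nesheim. -/
theorem hedonic_matching_equivalence (n : X → ℝ) (m : Y → ℝ)
    (hn : ∀ x, 0 ≤ n x) (hm : ∀ y, 0 ≤ m y) (α : X → Z → ℝ) (γ : Z → Y → ℝ) :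
    sSup {s : ℝ | ∃ (μs : X → Z → ℝ) (μd : Z → Y → ℝ),
        FeasibleFlow n m μs μd ∧ s = primalObj α γ μs μd} =
      sSup {s : ℝ | ∃ ν : X → Y → ℝ, (∀ x y, 0 ≤ ν x y) ∧
        (∀ x, ∑ y, ν x y ≤ n x) ∧ (∀ y, ∑ x, ν x y ≤ m y) ∧
        s = ∑ x, ∑ y, ν x y * univ.sup' univ_nonempty (fun z => α x z + γ z y)} :=
  hedonic_matching_equivalence_general n m α γ
end

section
/- Identification via conjugate duality (basis of Theorem 4): fix U : Z → ℝ. Assume each coordinate map (ε, ε₀) ↦ ε z and (ε, ε₀) ↦ ε₀ is P-integrable, and that at U ties occur with probability zero: P({(ε, ε₀) : U z + ε z = U z' + ε z'}) = 0 for all z ≠ z' and P({(ε, ε₀) : U z + ε z = ε₀}) = 0 for all z. Let μ z = P({(ε, ε₀) : U z + ε z > ε₀ and U z + ε z > U z' + ε z' for all z' ≠ z}) be the choice probabilities. Then U attains the supremum defining the Legendre–Fenchel conjugate of G at μ: for every U' : Z → ℝ, ∑_z μ z · U' z − G U' ≤ ∑_z μ z · U z − G U. -/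
/-!
Write `v = U + ε` and `w = U' + ε`. Off the null set of ties, either a unique `z` strictly beats
every other quality and the outside option, in which case `max (max_z w z) ε₀ - max (max_z v z) ε₀`
is at least `w z - v z = U' z - U z`, or the outside option wins strictly, in which case the
difference is nonnegative. Integrating this pointwise bound gives
`∑ z, μ z * (U' z - U z) ≤ G U' - G U`.
-/

open Finset MeasureTheory Real

variable {Z : Type*} [Fintype Z] [Nonempty Z]

def IsStrictArgmax {ι : Type*} (v : ι → ℝ) (e : ℝ) (z : ι) : Prop :=
  e < v z ∧ ∀ z', z' ≠ z → v z' < v z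

theorem IsStrictArgmax.unique {ι : Type*} {v : ι → ℝ} {e : ℝ} {z z' : ι}
    (h : IsStrictArgmax v e z) (h' : IsStrictArgmax v e z') : z' = z := by
  by_contra hne
  exact lt_asymm (h.2 z' hne) (h'.2 z fun h'' => hne h''.symm)

section Pointwise

variable {ι : Type*} [Fintype ι] [Nonempty ι] {v : ι → ℝ} {e : ℝ}

theorem IsStrictArgmax.max_sup'_eq {z : ι} (h : IsStrictArgmax v e z) :
    max (univ.sup' univ_nonempty v) e = v z := by
  have hsup : univ.sup' univ_nonempty v = v z :=
    le_antisymm (sup'_le _ _ fun z' _ => (eq_or_ne z' z).elim (fun h' => h' ▸ le_rfl)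
      fun hne => (h.2 z' hne).le) (le_sup' v (mem_univ z))
  rw [hsup, max_eq_left h.1.le]

theorem exists_isStrictArgmax_or_sup'_lt (hinj : Function.Injective v) (he : ∀ z, v z ≠ e) :
    (∃ z, IsStrictArgmax v e z) ∨ univ.sup' univ_nonempty v < e := by
  obtain ⟨z₀, -, hz₀⟩ := exists_mem_eq_sup' univ_nonempty v
  rcases (he z₀).lt_or_gt with hlt | hgt
  · exact Or.inr (hz₀ ▸ hlt)
  · refine Or.inl ⟨z₀, hgt, fun z' hne => ?_⟩
    exact (hz₀ ▸ le_sup' v (mem_univ z') : v z' ≤ v z₀).lt_of_ne (hinj.ne hne)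

theorem sum_indicator_isStrictArgmax_le (hinj : Function.Injective v) (he : ∀ z, v z ≠ e)
    (w : ι → ℝ) :
    ∑ z, {z | IsStrictArgmax v e z}.indicator (w - v) z ≤
      max (univ.sup' univ_nonempty w) e - max (univ.sup' univ_nonempty v) e := by
  rcases exists_isStrictArgmax_or_sup'_lt hinj he with ⟨z₀, hz₀⟩ | hout
  · have hother : ∀ z ≠ z₀, {z | IsStrictArgmax v e z}.indicator (w - v) z = 0 :=
      fun z hne => Set.indicator_of_notMem (s := {z | IsStrictArgmax v e z})
        (fun h => hne (IsStrictArgmax.unique hz₀ h)) (w - v)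
    have hw : w z₀ ≤ max (univ.sup' univ_nonempty w) e :=
      (le_sup' w (mem_univ z₀)).trans (le_max_left _ _)
    rw [sum_eq_single_of_mem z₀ (mem_univ z₀) fun z _ => hother z,
      Set.indicator_of_mem (show z₀ ∈ {z | IsStrictArgmax v e z} from hz₀), hz₀.max_sup'_eq,
      Pi.sub_apply]
    linarith
  · have hnone : ∀ z, {z | IsStrictArgmax v e z}.indicator (w - v) z = 0 :=
      fun z => Set.indicator_of_notMem (s := {z | IsStrictArgmax v e z})
        (fun h => (h.1.trans_le (le_sup' v (mem_univ z))).not_gt hout) (w - v)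
    rw [sum_eq_zero fun z _ => hnone z, max_eq_right hout.le, sub_nonneg]
    exact le_max_right _ _

end Pointwise

section Measure

variable {Ω ι : Type*} [MeasurableSpace Ω]

theorem measurableSet_isStrictArgmax [Countable ι] {v : Ω → ι → ℝ} {e : Ω → ℝ}
    (hv : ∀ z, Measurable fun ω => v ω z) (he : Measurable e) (z : ι) :
    MeasurableSet {ω | IsStrictArgmax (v ω) (e ω) z} := by
  have hset : {ω | IsStrictArgmax (v ω) (e ω) z} =
      {ω | e ω < v ω z} ∩ ⋂ z' ∈ ({z}ᶜ : Set ι), {ω | v ω z' < v ω z} := by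
    ext ω
    simp [IsStrictArgmax]
  rw [hset]
  exact (measurableSet_lt he (hv z)).inter
    (.biInter (Set.to_countable _) fun z' _ => measurableSet_lt (hv z') (hv z))

theorem ae_injective_of_measure_eq_zero [Countable ι] {P : Measure Ω} {v : Ω → ι → ℝ}
    (hties : ∀ z z', z ≠ z' → P {ω | v ω z = v ω z'} = 0) :
    ∀ᵐ ω ∂P, Function.Injective (v ω) := by
  have hpair : ∀ z z', ∀ᵐ ω ∂P, v ω z = v ω z' → z = z' := by
    intro z z'
    rcases eq_or_ne z z' with h | h
    · exact .of_forall fun _ _ => h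
    · rw [ae_iff]
      simpa [h] using hties z z' h
  filter_upwards [ae_all_iff.2 fun z => ae_all_iff.2 (hpair z)] with ω hω z z' using hω z z'

theorem integral_sum_indicator_const [Fintype ι] {P : Measure Ω} [IsFiniteMeasure P]
    {A : ι → Set Ω} (hA : ∀ z, MeasurableSet (A z)) (c : ι → ℝ) :
    Integrable (fun ω => ∑ z, (A z).indicator (fun _ => c z) ω) P ∧
      ∫ ω, ∑ z, (A z).indicator (fun _ => c z) ω ∂P = ∑ z, P.real (A z) * c z := by
  have hint : ∀ z, Integrable ((A z).indicator fun _ => c z) P := fun z =>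
    (integrable_indicator_iff (hA z)).2 (integrableOn_const (measure_ne_top P _))
  refine ⟨integrable_finsetSum _ fun z _ => hint z, ?_⟩
  rw [integral_finsetSum _ fun z _ => hint z]
  exact sum_congr rfl fun z _ => by rw [integral_indicator_const _ (hA z), smul_eq_mul]

end Measure

theorem conjugate_supremum_attained_general
    (P : Measure ((Z → ℝ) × ℝ)) [IsProbabilityMeasure P]
    (G : (Z → ℝ) → ℝ)
    (hGint : ∀ V : Z → ℝ,
      Integrable (fun ω : (Z → ℝ) × ℝ =>
        max (univ.sup' univ_nonempty fun z => V z + ω.1 z) ω.2) P)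
    (hG : ∀ V : Z → ℝ,
      G V = ∫ ω, max (univ.sup' univ_nonempty fun z => V z + ω.1 z) ω.2 ∂P)
    (U : Z → ℝ)
    (hties : ∀ z z', z ≠ z' → P {ω | U z + ω.1 z = U z' + ω.1 z'} = 0)
    (hties0 : ∀ z, P {ω | U z + ω.1 z = ω.2} = 0)
    (μ : Z → ℝ)
    (hμ : ∀ z, μ z = (P {ω | ω.2 < U z + ω.1 z ∧
      ∀ z', z' ≠ z → U z' + ω.1 z' < U z + ω.1 z}).toReal) :
    ∀ U' : Z → ℝ, ∑ z, μ z * U' z - G U' ≤ ∑ z, μ z * U z - G U := by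
  intro U'
  classical
  set A : Z → Set ((Z → ℝ) × ℝ) := fun z => {ω | IsStrictArgmax (fun z => U z + ω.1 z) ω.2 z}
  have hA : ∀ z, MeasurableSet (A z) := measurableSet_isStrictArgmax
    (fun z => measurable_const.add ((measurable_pi_apply z).comp measurable_fst)) measurable_snd
  obtain ⟨hint, hintegral⟩ := integral_sum_indicator_const (P := P) hA fun z => U' z - U z
  have hpointwise : (fun ω => ∑ z, (A z).indicator (fun _ => U' z - U z) ω) ≤ᵐ[P]
      fun ω => max (univ.sup' univ_nonempty fun z => U' z + ω.1 z) ω.2 -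
        max (univ.sup' univ_nonempty fun z => U z + ω.1 z) ω.2 := by
    have hne : ∀ᵐ ω ∂P, ∀ z, U z + ω.1 z ≠ ω.2 :=
      ae_all_iff.2 fun z => measure_eq_zero_iff_ae_notMem.1 (hties0 z)
    filter_upwards [ae_injective_of_measure_eq_zero hties, hne] with ω hinj hω
    simpa only [Set.indicator_apply, Set.mem_ofPred_eq, A, Pi.sub_apply, add_sub_add_right_eq_sub]
      using sum_indicator_isStrictArgmax_le hinj hω fun z => U' z + ω.1 z
  have hmono := integral_mono_ae hint ((hGint U').sub (hGint U)) hpointwise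
  simp only [Pi.sub_apply] at hmono
  rw [hintegral, integral_sub (hGint U') (hGint U), ← hG, ← hG] at hmono
  simp only [Measure.real, ← hμ, mul_sub, sum_sub_distrib, A, IsStrictArgmax] at hmono
  linarith

/-- Basis of Theorem 4: under a no-tie condition at `U`, the vector `U` attains the supremum
defining the Legendre–Fenchel conjugate of the expected indirect utility `G` at the vector of
choice probabilities `μ` it generates. -/
theorem conjugate_supremum_attained
    (P : Measure ((Z → ℝ) × ℝ)) [IsProbabilityMeasure P]
    (hcoord : ∀ z, Integrable (fun ω : (Z → ℝ) × ℝ => ω.1 z) P)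
    (hcoord0 : Integrable (fun ω : (Z → ℝ) × ℝ => ω.2) P)
    (G : (Z → ℝ) → ℝ)
    (hGint : ∀ V : Z → ℝ,
      Integrable (fun ω : (Z → ℝ) × ℝ =>
        max (univ.sup' univ_nonempty fun z => V z + ω.1 z) ω.2) P)
    (hG : ∀ V : Z → ℝ,
      G V = ∫ ω, max (univ.sup' univ_nonempty fun z => V z + ω.1 z) ω.2 ∂P)
    (U : Z → ℝ)
    (hties : ∀ z z', z ≠ z' → P {ω | U z + ω.1 z = U z' + ω.1 z'} = 0)
    (hties0 : ∀ z, P {ω | U z + ω.1 z = ω.2} = 0)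
    (μ : Z → ℝ)
    (hμ : ∀ z, μ z = (P {ω | ω.2 < U z + ω.1 z ∧
      ∀ z', z' ≠ z → U z' + ω.1 z' < U z + ω.1 z}).toReal) :
    ∀ U' : Z → ℝ, ∑ z, μ z * U' z - G U' ≤ ∑ z, μ z * U z - G U :=
  conjugate_supremum_attained_general P G hGint hG U hties hties0 μ hμ
end

section
/- Envelope theorem for the expected indirect utility (equation (14) of the paper, Daly–Zachary/Danskin): fix U : Z → ℝ. Assume each coordinate map (ε, ε₀) ↦ ε z and (ε, ε₀) ↦ ε₀ is P-integrable, and that at U ties occur with probability zero: P({(ε, ε₀) : U z + ε z = U z' + ε z'}) = 0 for all z ≠ z' and P({(ε, ε₀) : U z + ε z = ε₀}) = 0 for all z. Then G is differentiable at U and its partial derivative in the direction of coordinate z equals the choice probability ∂G/∂U_z (U) = P({(ε, ε₀) : U z + ε z > ε₀ and U z + ε z > U z' + ε z' for all z' ≠ z}). -/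
open Finset MeasureTheory Real

/-!
Pointwise in the shocks, `V ↦ max (maxᵢ (V i + εᵢ)) ε₀` is 1-Lipschitz, and wherever a single
option wins strictly it coincides near `V` with the utility of that option, an affine function of
`V` whose gradient is the indicator of that option. The no-tie hypotheses say that this happens
for almost every draw, so dominated differentiation under the integral sign gives `∇G(U)` as the
expectation of that gradient, i.e. the vector of choice probabilities.
-/

section ChoiceSets

variable {ι : Type*}

def choiceSet (V : ι → ℝ) (i : ι) : Set ((ι → ℝ) × ℝ) :=
  {ω | ω.2 < V i + ω.1 i ∧ ∀ j, j ≠ i → V j + ω.1 j < V i + ω.1 i}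

def outsideOptionSet (V : ι → ℝ) : Set ((ι → ℝ) × ℝ) :=
  {ω | ∀ i, V i + ω.1 i < ω.2}

theorem disjoint_choiceSet {V : ι → ℝ} {i j : ι} (hij : i ≠ j) :
    Disjoint (choiceSet V i) (choiceSet V j) :=
  Set.disjoint_left.2 fun _ hi hj => (hi.2 j hij.symm).not_gt (hj.2 i hij)

theorem disjoint_choiceSet_outsideOptionSet {V : ι → ℝ} {i : ι} :
    Disjoint (choiceSet V i) (outsideOptionSet V) :=
  Set.disjoint_left.2 fun _ hi ho => (ho i).not_gt hi.1

variable [Finite ι]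

theorem measurableSet_choiceSet (V : ι → ℝ) (i : ι) : MeasurableSet (choiceSet V i) := by
  simp only [choiceSet, Set.ofPred_and, Set.ofPred_forall]
  exact (measurableSet_lt (by fun_prop) (by fun_prop)).inter <|
    .iInter fun j => .iInter fun _ => measurableSet_lt (by fun_prop) (by fun_prop)

theorem isOpen_setOf_mem_choiceSet (ω : (ι → ℝ) × ℝ) (i : ι) :
    IsOpen {V | ω ∈ choiceSet V i} := by
  change IsOpen {V : ι → ℝ | ω.2 < V i + ω.1 i ∧ ∀ j, j ≠ i → V j + ω.1 j < V i + ω.1 i}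
  simp only [Set.ofPred_and, Set.ofPred_forall]
  exact (isOpen_lt (by fun_prop) (by fun_prop)).inter <|
    isOpen_iInter_of_finite fun j => isOpen_iInter_of_finite fun _ =>
      isOpen_lt (by fun_prop) (by fun_prop)

theorem isOpen_setOf_mem_outsideOptionSet (ω : (ι → ℝ) × ℝ) :
    IsOpen {V | ω ∈ outsideOptionSet V} := by
  change IsOpen {V : ι → ℝ | ∀ i, V i + ω.1 i < ω.2}
  simp only [Set.ofPred_forall]
  exact isOpen_iInter_of_finite fun i => isOpen_lt (by fun_prop) (by fun_prop)

end ChoiceSets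

section IndirectUtility

variable {ι : Type*} [Fintype ι]

noncomputable def choiceGradient (V : ι → ℝ) (ω : (ι → ℝ) × ℝ) : (ι → ℝ) →L[ℝ] ℝ :=
  ∑ i, (choiceSet V i).indicator (1 : (ι → ℝ) × ℝ → ℝ) ω • ContinuousLinearMap.proj i

theorem choiceGradient_of_mem_choiceSet {V : ι → ℝ} {ω : (ι → ℝ) × ℝ} {i : ι}
    (h : ω ∈ choiceSet V i) : choiceGradient V ω = ContinuousLinearMap.proj i := by
  rw [choiceGradient, Finset.sum_eq_single_of_mem i (mem_univ i), Set.indicator_of_mem h,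
    Pi.one_apply, one_smul]
  intro j _ hji
  rw [Set.indicator_of_notMem ((disjoint_choiceSet hji.symm).notMem_of_mem_left h), zero_smul]

theorem choiceGradient_of_mem_outsideOptionSet {V : ι → ℝ} {ω : (ι → ℝ) × ℝ}
    (h : ω ∈ outsideOptionSet V) : choiceGradient V ω = 0 :=
  Finset.sum_eq_zero fun i _ => by
    rw [Set.indicator_of_notMem (disjoint_choiceSet_outsideOptionSet.notMem_of_mem_right h),
      zero_smul]

theorem stronglyMeasurable_choiceGradient (V : ι → ℝ) :
    StronglyMeasurable (choiceGradient V) :=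
  Finset.stronglyMeasurable_fun_sum _ fun i _ =>
    (measurable_const.indicator (measurableSet_choiceSet V i)).stronglyMeasurable.smul_const _

theorem integral_choiceGradient (P : Measure ((ι → ℝ) × ℝ)) [IsFiniteMeasure P] (V : ι → ℝ) :
    ∫ ω, choiceGradient V ω ∂P = ∑ i, P.real (choiceSet V i) • ContinuousLinearMap.proj i := by
  simp only [choiceGradient]
  rw [integral_finsetSum _ fun i _ =>
    ((integrable_const 1).indicator (measurableSet_choiceSet V i)).smul_const _]
  simp only [integral_smul_const, integral_indicator_one (measurableSet_choiceSet V _)]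

variable [Nonempty ι]

noncomputable def indirectUtility (V : ι → ℝ) (ω : (ι → ℝ) × ℝ) : ℝ :=
  max (univ.sup' univ_nonempty fun i => V i + ω.1 i) ω.2

theorem continuous_indirectUtility (V : ι → ℝ) : Continuous (indirectUtility V) :=
  (Continuous.finset_sup'_apply univ_nonempty fun i _ => by fun_prop).max continuous_snd

theorem lipschitzWith_indirectUtility (ω : (ι → ℝ) × ℝ) :
    LipschitzWith 1 (indirectUtility · ω) := by
  refine LipschitzWith.of_le_add fun V W => max_le (sup'_le _ _ fun i _ => ?_) ?_
  · have hVW : V i ≤ W i + dist V W :=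
      sub_le_iff_le_add'.1 ((le_abs_self _).trans (dist_le_pi_dist V W i))
    calc V i + ω.1 i ≤ (W i + ω.1 i) + dist V W := by linarith
      _ ≤ indirectUtility W ω + dist V W := by
        gcongr
        exact (le_sup' (fun i => W i + ω.1 i) (mem_univ i)).trans (le_max_left _ _)
  · exact (le_max_right _ _).trans (le_add_of_nonneg_right dist_nonneg)

theorem indirectUtility_of_mem_choiceSet {V : ι → ℝ} {ω : (ι → ℝ) × ℝ} {i : ι}
    (h : ω ∈ choiceSet V i) : indirectUtility V ω = V i + ω.1 i := by
  have hsup : univ.sup' univ_nonempty (fun j => V j + ω.1 j) = V i + ω.1 i :=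
    le_antisymm
      (sup'_le _ _ fun j _ => (eq_or_ne j i).elim (fun hj => hj ▸ le_rfl) fun hj => (h.2 j hj).le)
      (le_sup' (fun j => V j + ω.1 j) (mem_univ i))
  rw [indirectUtility, hsup, max_eq_left h.1.le]

theorem indirectUtility_of_mem_outsideOptionSet {V : ι → ℝ} {ω : (ι → ℝ) × ℝ}
    (h : ω ∈ outsideOptionSet V) : indirectUtility V ω = ω.2 :=
  max_eq_right ((sup'_lt_iff _).2 fun i _ => h i).le

theorem hasFDerivAt_indirectUtility_of_mem_choiceSet {V : ι → ℝ} {ω : (ι → ℝ) × ℝ} {i : ι}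
    (h : ω ∈ choiceSet V i) :
    HasFDerivAt (indirectUtility · ω) (ContinuousLinearMap.proj (R := ℝ) i) V :=
  ((hasFDerivAt_apply i V).add_const (ω.1 i)).congr_of_eventuallyEq <|
    ((isOpen_setOf_mem_choiceSet ω i).eventually_mem h).mono fun _ =>
      indirectUtility_of_mem_choiceSet

theorem hasFDerivAt_indirectUtility_of_mem_outsideOptionSet {V : ι → ℝ} {ω : (ι → ℝ) × ℝ}
    (h : ω ∈ outsideOptionSet V) : HasFDerivAt (indirectUtility · ω) (0 : (ι → ℝ) →L[ℝ] ℝ) V :=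
  (hasFDerivAt_const ω.2 V).congr_of_eventuallyEq <|
    ((isOpen_setOf_mem_outsideOptionSet ω).eventually_mem h).mono fun _ =>
      indirectUtility_of_mem_outsideOptionSet

theorem hasFDerivAt_indirectUtility {V : ι → ℝ} {ω : (ι → ℝ) × ℝ}
    (h : (∃ i, ω ∈ choiceSet V i) ∨ ω ∈ outsideOptionSet V) :
    HasFDerivAt (indirectUtility · ω) (choiceGradient V ω) V := by
  rcases h with ⟨i, hi⟩ | ho
  · rw [choiceGradient_of_mem_choiceSet hi]
    exact hasFDerivAt_indirectUtility_of_mem_choiceSet hi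
  · rw [choiceGradient_of_mem_outsideOptionSet ho]
    exact hasFDerivAt_indirectUtility_of_mem_outsideOptionSet ho

theorem exists_mem_choiceSet_or_mem_outsideOptionSet {V : ι → ℝ} {ω : (ι → ℝ) × ℝ}
    (hties : ∀ i j, i ≠ j → V i + ω.1 i ≠ V j + ω.1 j) (hties0 : ∀ i, V i + ω.1 i ≠ ω.2) :
    (∃ i, ω ∈ choiceSet V i) ∨ ω ∈ outsideOptionSet V := by
  obtain ⟨i, -, hmax⟩ := exists_max_image univ (fun i => V i + ω.1 i) univ_nonempty
  rcases (hties0 i).lt_or_gt with hout | hin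
  · exact .inr fun j => (hmax j (mem_univ j)).trans_lt hout
  · exact .inl ⟨i, hin, fun j hji => (hmax j (mem_univ j)).lt_of_ne (hties j i hji)⟩

theorem ae_exists_mem_choiceSet_or_mem_outsideOptionSet (P : Measure ((ι → ℝ) × ℝ))
    {V : ι → ℝ} (hties : ∀ i j, i ≠ j → P {ω | V i + ω.1 i = V j + ω.1 j} = 0)
    (hties0 : ∀ i, P {ω | V i + ω.1 i = ω.2} = 0) :
    ∀ᵐ ω ∂P, (∃ i, ω ∈ choiceSet V i) ∨ ω ∈ outsideOptionSet V := by
  have hne : ∀ᵐ ω ∂P, ∀ i j, i ≠ j → V i + ω.1 i ≠ V j + ω.1 j :=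
    ae_all_iff.2 fun i => ae_all_iff.2 fun j => Filter.eventually_imp_distrib_left.2 fun hij =>
      measure_eq_zero_iff_ae_notMem.1 (hties i j hij)
  have hne0 : ∀ᵐ ω ∂P, ∀ i, V i + ω.1 i ≠ ω.2 :=
    ae_all_iff.2 fun i => measure_eq_zero_iff_ae_notMem.1 (hties0 i)
  filter_upwards [hne, hne0] with ω using exists_mem_choiceSet_or_mem_outsideOptionSet

theorem hasFDerivAt_integral_indirectUtility (P : Measure ((ι → ℝ) × ℝ)) [IsFiniteMeasure P]
    {V : ι → ℝ} (hint : Integrable (indirectUtility V) P)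
    (hae : ∀ᵐ ω ∂P, (∃ i, ω ∈ choiceSet V i) ∨ ω ∈ outsideOptionSet V) :
    HasFDerivAt (fun W => ∫ ω, indirectUtility W ω ∂P) (∫ ω, choiceGradient V ω ∂P) V :=
  (hasFDerivAt_integral_of_dominated_loc_of_lip (bound := fun _ => 1) Filter.univ_mem
    (.of_forall fun W => (continuous_indirectUtility W).aestronglyMeasurable) hint
    (stronglyMeasurable_choiceGradient V).aestronglyMeasurable
    (.of_forall fun ω => by simpa using lipschitzWith_indirectUtility ω)
    (integrable_const 1) (hae.mono fun _ => hasFDerivAt_indirectUtility)).2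

end IndirectUtility

variable {Z : Type*} [Fintype Z] [Nonempty Z] [DecidableEq Z]

theorem envelope_choice_probabilities_general
    (P : Measure ((Z → ℝ) × ℝ)) [IsProbabilityMeasure P]
    (G : (Z → ℝ) → ℝ)
    (hGint : ∀ V : Z → ℝ,
      Integrable (fun ω : (Z → ℝ) × ℝ =>
        max (univ.sup' univ_nonempty fun z => V z + ω.1 z) ω.2) P)
    (hG : ∀ V : Z → ℝ,
      G V = ∫ ω, max (univ.sup' univ_nonempty fun z => V z + ω.1 z) ω.2 ∂P)
    (U : Z → ℝ)
    (hties : ∀ z z', z ≠ z' → P {ω | U z + ω.1 z = U z' + ω.1 z'} = 0)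
    (hties0 : ∀ z, P {ω | U z + ω.1 z = ω.2} = 0) :
    ∃ L : (Z → ℝ) →L[ℝ] ℝ, HasFDerivAt G L U ∧
      ∀ z, L (Pi.single z 1) = (P {ω | ω.2 < U z + ω.1 z ∧
        ∀ z', z' ≠ z → U z' + ω.1 z' < U z + ω.1 z}).toReal := by
  refine ⟨∑ z, P.real (choiceSet U z) • ContinuousLinearMap.proj z, ?_, fun z => ?_⟩
  · rw [funext hG, ← integral_choiceGradient]
    exact hasFDerivAt_integral_indirectUtility P (hGint U)
      (ae_exists_mem_choiceSet_or_mem_outsideOptionSet P hties hties0)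
  · simp [Pi.single_apply, measureReal_def, choiceSet]

/-- Equation (14), Daly–Zachary/Danskin envelope theorem: under a no-tie condition at `U`,
the expected indirect utility `G` is differentiable at `U` and its partial derivatives are the
choice probabilities. -/
theorem envelope_choice_probabilities
    (P : Measure ((Z → ℝ) × ℝ)) [IsProbabilityMeasure P]
    (hcoord : ∀ z, Integrable (fun ω : (Z → ℝ) × ℝ => ω.1 z) P)
    (hcoord0 : Integrable (fun ω : (Z → ℝ) × ℝ => ω.2) P)
    (G : (Z → ℝ) → ℝ)
    (hGint : ∀ V : Z → ℝ,
      Integrable (fun ω : (Z → ℝ) × ℝ =>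
        max (univ.sup' univ_nonempty fun z => V z + ω.1 z) ω.2) P)
    (hG : ∀ V : Z → ℝ,
      G V = ∫ ω, max (univ.sup' univ_nonempty fun z => V z + ω.1 z) ω.2 ∂P)
    (U : Z → ℝ)
    (hties : ∀ z z', z ≠ z' → P {ω | U z + ω.1 z = U z' + ω.1 z'} = 0)
    (hties0 : ∀ z, P {ω | U z + ω.1 z = ω.2} = 0) :
    ∃ L : (Z → ℝ) →L[ℝ] ℝ, HasFDerivAt G L U ∧
      ∀ z, L (Pi.single z 1) = (P {ω | ω.2 < U z + ω.1 z ∧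
        ∀ z', z' ≠ z → U z' + ω.1 z' < U z + ω.1 z}).toReal :=
  envelope_choice_probabilities_general P G hGint hG U hties hties0
end

section
/- Gumbel log-sum-exp formula: let P = ⨂_{z ∈ Z} ν be the product measure on Z → ℝ of |Z| independent standard Gumbel distributions. Then for every U : Z → ℝ, the expectation of the maximum satisfies ∫ max_z (U z + ε z) dP(ε) = log(∑_z exp (U z)) + γ, where γ is the Euler–Mascheroni constant. -/
/-!
If `E` is standard exponential, then `-log E` has distribution function `exp (-exp (-t))`,
so a standard Gumbel variable has mean `-∫₀^∞ log u · e^{-u} du = -Γ'(1) = γ`.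
The Gumbel family is max-stable:
`P(max_z (U z + ε z) ≤ t) = ∏_z exp (-exp (U z - t)) = exp (-exp (c - t))` with
`c = log ∑_z exp (U z)`, so the maximum is distributed as `c` plus a standard Gumbel variable.
-/

open Set MeasureTheory Real

theorem integral_log_mul_exp_neg :
    ∫ t in Ioi (0 : ℝ), log t * exp (-t) = -eulerMascheroniConstant := by
  have hGammaIntegral := Complex.hasDerivAt_GammaIntegral (s := 1) (by norm_num)
  simp only [sub_self, Complex.cpow_zero, one_mul, ← Complex.ofReal_mul,
    integral_complex_ofReal] at hGammaIntegral
  have hGamma : HasDerivAt Complex.Gamma (∫ t in Ioi (0 : ℝ), log t * exp (-t) : ℝ) 1 := by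
    refine hGammaIntegral.congr_of_eventuallyEq ?_
    filter_upwards [(isOpen_lt continuous_const Complex.continuous_re).mem_nhds
      (by norm_num : (0 : ℝ) < (1 : ℂ).re)] with s hs
    exact Complex.Gamma_eq_integral hs
  simpa [Complex.Gamma_ofReal] using hGamma.real_of_complex.unique hasDerivAt_Gamma_one

noncomputable def stdExponential : Measure ℝ :=
  (volume.restrict (Ioi 0)).withDensity fun u => ENNReal.ofReal (exp (-u))

theorem stdExponential_Ici {a : ℝ} (ha : 0 < a) :
    stdExponential (Ici a) = ENNReal.ofReal (exp (-a)) := by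
  rw [stdExponential, withDensity_apply _ measurableSet_Ici, Measure.restrict_restrict
    measurableSet_Ici, inter_eq_left.2 (Ici_subset_Ioi.2 ha), setLIntegral_congr Ioi_ae_eq_Ici.symm,
    ← ofReal_integral_eq_lintegral_ofReal (integrableOn_exp_neg_Ioi a)
      (.of_forall fun u => (exp_pos _).le), integral_exp_neg_Ioi]

theorem ae_pos_stdExponential : ∀ᵐ u ∂stdExponential, 0 < u :=
  withDensity_absolutelyContinuous _ _ (ae_restrict_mem measurableSet_Ioi)

theorem map_neg_log_stdExponential_Iic (t : ℝ) :
    (stdExponential.map fun u => -log u) (Iic t) = ENNReal.ofReal (exp (-exp (-t))) := by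
  have hpre : (fun u => -log u) ⁻¹' Iic t =ᵐ[stdExponential] Ici (exp (-t)) := by
    refine Filter.eventuallyEq_set.2 ?_
    filter_upwards [ae_pos_stdExponential] with u hu
    simp only [mem_preimage, mem_Iic, mem_Ici, neg_le, le_log_iff_exp_le hu]
  rw [Measure.map_apply (by fun_prop) measurableSet_Iic, measure_congr hpre,
    stdExponential_Ici (exp_pos _)]

theorem integral_neg_log_stdExponential :
    ∫ u, -log u ∂stdExponential = eulerMascheroniConstant := by
  rw [stdExponential, integral_withDensity_eq_integral_toReal_smul (by fun_prop)
    (.of_forall fun _ => ENNReal.ofReal_lt_top)]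
  simp only [ENNReal.toReal_ofReal (exp_pos _).le, smul_eq_mul, mul_neg, integral_neg]
  simp_rw [mul_comm (exp _), integral_log_mul_exp_neg, neg_neg]

def HasGumbelCDF (ν : Measure ℝ) : Prop :=
  ∀ t : ℝ, ν (Iic t) = ENNReal.ofReal (exp (-exp (-t)))

namespace HasGumbelCDF

variable {ν : Measure ℝ} [IsFiniteMeasure ν]

theorem eq_map_neg_log_stdExponential (hν : HasGumbelCDF ν) :
    ν = stdExponential.map fun u => -log u :=
  Measure.ext_of_Iic _ _ fun t => by rw [hν, map_neg_log_stdExponential_Iic]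

theorem integral_id (hν : HasGumbelCDF ν) : ∫ x, x ∂ν = eulerMascheroniConstant := by
  rw [hν.eq_map_neg_log_stdExponential,
    integral_map (f := fun x => x) (by fun_prop) aestronglyMeasurable_id,
    integral_neg_log_stdExponential]

-- A non-integrable function has Bochner integral `0`, whereas this one integrates to `γ > 0`.
theorem integrable_id (hν : HasGumbelCDF ν) : Integrable (fun x => x) ν :=
  .of_integral_ne_zero <| by
    rw [hν.integral_id]
    exact (one_half_pos.trans one_half_lt_eulerMascheroniConstant).ne'

end HasGumbelCDF

open Finset

section Maximum

variable {ι : Type*} [Fintype ι] [Nonempty ι]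

theorem measurable_sup'_add (U : ι → ℝ) :
    Measurable fun ε : ι → ℝ => univ.sup' univ_nonempty fun i => U i + ε i := by
  convert Finset.measurable_sup' (f := fun i (ε : ι → ℝ) => U i + ε i) univ_nonempty
    fun i _ => by fun_prop
  rw [Finset.sup'_apply]

theorem measure_pi_setOf_sup'_add_le (μ : ι → Measure ℝ) [∀ i, SigmaFinite (μ i)]
    (U : ι → ℝ) (t : ℝ) :
    Measure.pi μ {ε | univ.sup' univ_nonempty (fun i => U i + ε i) ≤ t} =
      ∏ i, μ i (Iic (t - U i)) := by
  have : {ε : ι → ℝ | univ.sup' univ_nonempty (fun i => U i + ε i) ≤ t} =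
      univ.pi fun i => Iic (t - U i) := by
    ext ε
    simp only [mem_ofPred_eq, Finset.sup'_le_iff, Finset.mem_univ, true_implies, Set.mem_pi,
      Set.mem_univ, Set.mem_Iic, le_sub_iff_add_le']
  rw [this, Measure.pi_pi]

theorem prod_exp_neg_exp_sub (U : ι → ℝ) (t : ℝ) :
    ∏ i, exp (-exp (-(t - U i))) = exp (-exp (-(t - log (∑ i, exp (U i))))) := by
  rw [← exp_sum, sum_neg_distrib]
  have hsum : 0 < ∑ i, exp (U i) := sum_pos (fun i _ => exp_pos (U i)) univ_nonempty
  simp_rw [neg_sub, exp_sub, ← sum_div, exp_log hsum]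

theorem HasGumbelCDF.map_sup'_add {ν : Measure ℝ} [IsFiniteMeasure ν] (hν : HasGumbelCDF ν)
    (U : ι → ℝ) :
    (Measure.pi fun _ : ι => ν).map (fun ε => univ.sup' univ_nonempty fun i => U i + ε i) =
      ν.map (· + log (∑ i, exp (U i))) := by
  refine Measure.ext_of_Iic _ _ fun t => ?_
  rw [Measure.map_apply (measurable_sup'_add U) measurableSet_Iic,
    Measure.map_apply (measurable_add_const _) measurableSet_Iic, preimage_add_const_Iic, hν,
    ← prod_exp_neg_exp_sub, ENNReal.ofReal_prod_of_nonneg fun i _ => (exp_pos _).le]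
  exact (measure_pi_setOf_sup'_add_le _ U t).trans (prod_congr rfl fun i _ => hν _)

end Maximum

open Finset MeasureTheory Real

variable {Z : Type*} [Fintype Z] [Nonempty Z]

/-- Gumbel log-sum-exp formula: the expectation of the maximum of Gumbel-perturbed utilities
is the log-sum-exp plus the Euler–Mascheroni constant. -/
theorem gumbel_logsumexp
    (ν : Measure ℝ) [IsProbabilityMeasure ν]
    (hcdf : ∀ t : ℝ, ν (Set.Iic t) = ENNReal.ofReal (Real.exp (-Real.exp (-t))))
    (U : Z → ℝ) :
    ∫ ε : Z → ℝ, univ.sup' univ_nonempty (fun z => U z + ε z)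
        ∂(Measure.pi fun _ : Z => ν) =
      Real.log (∑ z, Real.exp (U z)) + Real.eulerMascheroniConstant := by
  have hν : HasGumbelCDF ν := hcdf
  set c := Real.log (∑ z, Real.exp (U z))
  calc ∫ ε, univ.sup' univ_nonempty (fun z => U z + ε z) ∂(Measure.pi fun _ : Z => ν)
      = ∫ x, x ∂(Measure.pi fun _ : Z => ν).map
          (fun ε => univ.sup' univ_nonempty fun z => U z + ε z) :=
        (integral_map (measurable_sup'_add U).aemeasurable aestronglyMeasurable_id).symm
    _ = ∫ x, x ∂ν.map (· + c) := by rw [hν.map_sup'_add]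
    _ = ∫ x, x + c ∂ν :=
        integral_map (measurable_add_const c).aemeasurable aestronglyMeasurable_id
    _ = eulerMascheroniConstant + c := by
        rw [integral_add hν.integrable_id (integrable_const c), hν.integral_id, integral_const,
          probReal_univ, one_smul]
    _ = c + eulerMascheroniConstant := add_comm _ _
end

section
/- Logit choice probabilities: let P = ⨂_{z ∈ Z} ν be the product measure on Z → ℝ of |Z| independent standard Gumbel distributions. Then for every U : Z → ℝ and every z ∈ Z, P({ε : U z + ε z > U z' + ε z' for all z' ≠ z}) = exp(U z) / ∑_{z'} exp(U z'). -/
open Finset MeasureTheory Real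

/-!
Write `G t = exp (-exp (-t))` for the Gumbel distribution function. Conditionally on `ε z = t`,
alternative `z` wins iff `ε z' < t + U z - U z'` for every `z' ≠ z`, which has probability
`∏ G (t + U z - U z') = G t ^ c` with `c = ∑_{z' ≠ z} exp (U z' - U z)`, by the max-stability
identity `G (t + s) = G t ^ exp (-s)`. Since `ν` is the image of the uniform distribution on
`(0, 1)` under the quantile function of `G`, `G (ε z)` is uniform, so the choice probability is
`∫₀¹ u ^ c du = 1 / (c + 1) = exp (U z) / ∑ exp (U z')`.
-/

noncomputable def gumbelCDF (t : ℝ) : ℝ := exp (-exp (-t))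

noncomputable def gumbelQuantile (u : ℝ) : ℝ := -log (-log u)

lemma gumbelCDF_pos (t : ℝ) : 0 < gumbelCDF t := exp_pos _

lemma gumbelCDF_lt_one (t : ℝ) : gumbelCDF t < 1 :=
  exp_lt_one_iff.2 (neg_lt_zero.2 (exp_pos _))

lemma gumbelCDF_strictMono : StrictMono gumbelCDF :=
  fun _ _ h => exp_lt_exp.2 (neg_lt_neg (exp_lt_exp.2 (neg_lt_neg h)))

lemma gumbelCDF_gumbelQuantile {u : ℝ} (hu : u ∈ Set.Ioo 0 1) :
    gumbelCDF (gumbelQuantile u) = u := by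
  have hlog : 0 < -log u := neg_pos.2 (log_neg hu.1 hu.2)
  rw [gumbelCDF, gumbelQuantile, neg_neg, exp_log hlog, neg_neg, exp_log hu.1]

lemma gumbelCDF_add (t s : ℝ) : gumbelCDF (t + s) = gumbelCDF t ^ exp (-s) := by
  rw [gumbelCDF, gumbelCDF, ← exp_mul, neg_add, exp_add]
  ring_nf

lemma measurable_gumbelQuantile : Measurable gumbelQuantile := by
  unfold gumbelQuantile; fun_prop

lemma gumbelQuantile_preimage_Iic_inter (a : ℝ) :
    gumbelQuantile ⁻¹' Set.Iic a ∩ Set.Ioo 0 1 = Set.Ioc 0 (gumbelCDF a) := by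
  ext u
  constructor
  · rintro ⟨hle, hu⟩
    exact ⟨hu.1, gumbelCDF_gumbelQuantile hu ▸ gumbelCDF_strictMono.monotone hle⟩
  · rintro ⟨hu0, hle⟩
    have hu : u ∈ Set.Ioo 0 1 := ⟨hu0, hle.trans_lt (gumbelCDF_lt_one a)⟩
    refine ⟨?_, hu⟩
    rwa [Set.mem_preimage, Set.mem_Iic, ← gumbelCDF_strictMono.le_iff_le,
      gumbelCDF_gumbelQuantile hu]

lemma gumbelQuantile_preimage_Iio_inter (a : ℝ) :
    gumbelQuantile ⁻¹' Set.Iio a ∩ Set.Ioo 0 1 = Set.Ioo 0 (gumbelCDF a) := by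
  ext u
  constructor
  · rintro ⟨hlt, hu⟩
    exact ⟨hu.1, gumbelCDF_gumbelQuantile hu ▸ gumbelCDF_strictMono hlt⟩
  · rintro ⟨hu0, hlt⟩
    have hu : u ∈ Set.Ioo 0 1 := ⟨hu0, hlt.trans (gumbelCDF_lt_one a)⟩
    refine ⟨?_, hu⟩
    rwa [Set.mem_preimage, Set.mem_Iio, ← gumbelCDF_strictMono.lt_iff_lt,
      gumbelCDF_gumbelQuantile hu]

section Gumbel

variable {ν : Measure ℝ} [IsFiniteMeasure ν]

lemma eq_map_gumbelQuantile (hν : ∀ t, ν (Set.Iic t) = ENNReal.ofReal (gumbelCDF t)) :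
    ν = (volume.restrict (Set.Ioo 0 1)).map gumbelQuantile := by
  refine Measure.ext_of_Iic _ _ fun a => ?_
  rw [hν, Measure.map_apply measurable_gumbelQuantile measurableSet_Iic,
    Measure.restrict_apply (measurable_gumbelQuantile measurableSet_Iic),
    gumbelQuantile_preimage_Iic_inter, volume_Ioc, sub_zero]

lemma measure_Iio_of_gumbelCDF (hν : ∀ t, ν (Set.Iic t) = ENNReal.ofReal (gumbelCDF t))
    (a : ℝ) : ν (Set.Iio a) = ENNReal.ofReal (gumbelCDF a) := by
  rw [eq_map_gumbelQuantile hν, Measure.map_apply measurable_gumbelQuantile measurableSet_Iio,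
    Measure.restrict_apply (measurable_gumbelQuantile measurableSet_Iio),
    gumbelQuantile_preimage_Iio_inter, volume_Ioo, sub_zero]

lemma lintegral_gumbelCDF_rpow (hν : ∀ t, ν (Set.Iic t) = ENNReal.ofReal (gumbelCDF t))
    {c : ℝ} (hc : -1 < c) :
    ∫⁻ t, ENNReal.ofReal (gumbelCDF t ^ c) ∂ν = ENNReal.ofReal (1 / (c + 1)) := by
  have hint : IntegrableOn (fun u : ℝ => u ^ c) (Set.Ioo 0 1) := by
    rw [← integrableOn_Ioc_iff_integrableOn_Ioo,
      ← intervalIntegrable_iff_integrableOn_Ioc_of_le zero_le_one]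
    exact intervalIntegral.intervalIntegrable_rpow' hc
  rw [eq_map_gumbelQuantile hν, lintegral_map (by unfold gumbelCDF; fun_prop)
      measurable_gumbelQuantile,
    setLIntegral_congr_fun (g := fun u => ENNReal.ofReal (u ^ c)) measurableSet_Ioo
      fun u hu => by rw [gumbelCDF_gumbelQuantile hu],
    ← ofReal_integral_eq_lintegral_ofReal hint
      ((ae_restrict_iff' measurableSet_Ioo).2 (ae_of_all _ fun u hu => rpow_nonneg hu.1.le c)),
    ← integral_Ioc_eq_integral_Ioo, ← intervalIntegral.integral_of_le zero_le_one,
    integral_rpow (Or.inl hc), one_rpow, zero_rpow (by linarith), sub_zero]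

end Gumbel

lemma measure_pi_setOf_forall_ne_lt_add {Z : Type*} [Fintype Z] [DecidableEq Z]
    (μ : Z → Measure ℝ) [∀ i, SigmaFinite (μ i)] (z : Z) (d : Z → ℝ) :
    Measure.pi μ {ε | ∀ z', z' ≠ z → ε z' < ε z + d z'} =
      ∫⁻ t, ∏ z' ∈ univ.erase z, μ z' (Set.Iio (t + d z')) ∂μ z := by
  set S := {ε : Z → ℝ | ∀ z', z' ≠ z → ε z' < ε z + d z'}
  have hS : MeasurableSet S := by
    simp only [S, Set.ofPred_forall]
    exact .iInter fun z' => .iInter fun _ => measurableSet_lt (by fun_prop) (by fun_prop)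
  let e := MeasurableEquiv.piEquivPiSubtypeProd (fun _ : Z => ℝ) (· ≠ z)
  let z₀ : {i // ¬ i ≠ z} := ⟨z, not_not.2 rfl⟩
  let _ : Unique {i // ¬ i ≠ z} := ⟨⟨z₀⟩, fun i => Subtype.ext (not_not.1 i.2)⟩
  have hsection (y : {i // ¬ i ≠ z} → ℝ) : (fun x => (x, y)) ⁻¹' (e.symm ⁻¹' S) =
      Set.univ.pi fun i : {i // i ≠ z} => Set.Iio (y z₀ + d i) := by
    ext x
    simp only [S, e, Set.mem_preimage, Set.mem_ofPred_eq, Set.mem_univ_pi, Set.mem_Iio,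
      MeasurableEquiv.piEquivPiSubtypeProd_symm_apply]
    constructor
    · intro h i
      simpa [i.2] using h i i.2
    · intro h z' hz'
      simpa [hz'] using h ⟨z', hz'⟩
  rw [← ((measurePreserving_piEquivPiSubtypeProd μ (· ≠ z)).symm e).measure_preimage
      hS.nullMeasurableSet, Measure.prod_apply_symm (e.symm.measurable hS)]
  simp_rw [hsection, Measure.pi_pi]
  have hprod (t : ℝ) : ∏ i : {i // i ≠ z}, μ i (Set.Iio (t + d i)) =
      ∏ z' ∈ univ.erase z, μ z' (Set.Iio (t + d z')) :=
    (prod_subtype (univ.erase z) (fun _ => by simp) fun z' => μ z' (Set.Iio (t + d z'))).symm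
  simp_rw [hprod]
  exact (measurePreserving_piUnique fun i : {i // ¬ i ≠ z} => μ i).lintegral_comp_emb
    (MeasurableEquiv.measurableEmbedding _)
    fun t => ∏ z' ∈ univ.erase z, μ z' (Set.Iio (t + d z'))

variable {Z : Type*} [Fintype Z] [Nonempty Z]

/-- Logit choice probabilities from i.i.d. standard Gumbel shocks. -/
theorem gumbel_logit_choice_probabilities
    (ν : Measure ℝ) [IsProbabilityMeasure ν]
    (hcdf : ∀ t : ℝ, ν (Set.Iic t) = ENNReal.ofReal (Real.exp (-Real.exp (-t))))
    (U : Z → ℝ) (z : Z) :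
    (Measure.pi fun _ : Z => ν)
        {ε : Z → ℝ | ∀ z', z' ≠ z → U z' + ε z' < U z + ε z} =
      ENNReal.ofReal (Real.exp (U z) / ∑ z', Real.exp (U z')) := by
  classical
  set c := ∑ z' ∈ univ.erase z, exp (U z' - U z)
  have hchoice : {ε : Z → ℝ | ∀ z', z' ≠ z → U z' + ε z' < U z + ε z} =
      {ε | ∀ z', z' ≠ z → ε z' < ε z + (U z - U z')} := by
    ext ε
    refine forall₂_congr fun z' _ => ?_
    constructor <;> intro h <;> linarith
  have hprod (t : ℝ) : ∏ z' ∈ univ.erase z, ν (Set.Iio (t + (U z - U z'))) =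
      ENNReal.ofReal (gumbelCDF t ^ c) := by
    simp_rw [measure_Iio_of_gumbelCDF hcdf, gumbelCDF_add, neg_sub]
    rw [← ENNReal.ofReal_prod_of_nonneg fun _ _ => (rpow_pos_of_pos (gumbelCDF_pos t) _).le,
      rpow_sum_of_pos (gumbelCDF_pos t)]
  have hc : c + 1 = (∑ z', exp (U z')) / exp (U z) := by
    rw [sum_div, ← sum_erase_add univ _ (mem_univ z), div_self (exp_pos _).ne']
    simp_rw [c, exp_sub]
  rw [hchoice, measure_pi_setOf_forall_ne_lt_add, lintegral_congr hprod,
    lintegral_gumbelCDF_rpow hcdf (neg_one_lt_zero.trans_le (by positivity)), hc, one_div_div]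
end

section
/- Entropic social-welfare duality (Theorem 3(i)-(ii) in the Logit case): assume n x > 0 for all x and m y > 0 for all y. Define W(p) = ∑_x n x · log(1 + ∑_z exp(α x z + p z)) + ∑_y m y · log(1 + ∑_z exp(γ z y − p z)) for p : Z → ℝ. For a feasible flow (μˢ, μᵈ), set μ_{x0} = n x − ∑_z μˢ x z and μ_{0y} = m y − ∑_z μᵈ z y, and define the generalized entropy E(μˢ, μᵈ) = ∑_x (∑_z μˢ x z · log(μˢ x z / n x) + μ_{x0} · log(μ_{x0} / n x)) + ∑_y (∑_z μᵈ z y · log(μᵈ z y / m y) + μ_{0y} · log(μ_{0y} / m y)), with the convention 0 · log 0 = 0. Then the infimum of W over all p : Z → ℝ equals the supremum, over all feasible flows (μˢ, μᵈ), of ∑_{x,z} μˢ x z · α x z + ∑_{z,y} μᵈ z y · γ z y − E(μˢ, μᵈ). -/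
/-!
Treat non-participation as an extra good `none` with payoff `0`. Each agent type's contribution to
the entropic welfare is then an entropic surplus `∑ μᵢ (aᵢ - log (μᵢ / N))` over a flow of total
mass `N`, and Gibbs' inequality bounds it by `N log ∑ exp aᵢ`, with equality at the logit flow
`N • softmax a`. At any prices `p`, market clearing makes the payments `∑ p_z μ` cancel, so the
welfare of every feasible flow is at most `W p`. The function `W` is continuous and coercive, hence
attains its minimum at some `p`; its first-order condition says that the logit flows at `p` clear
the market, and their welfare equals `W p`.
-/

open Finset MeasureTheory Real

variable {X Y Z : Type*} [Fintype X] [Fintype Y] [Fintype Z]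
  [Nonempty X] [Nonempty Y] [Nonempty Z]

/-- The dual welfare function over prices in the Logit specification. -/
noncomputable def Wlogit (n : X → ℝ) (m : Y → ℝ) (α : X → Z → ℝ) (γ : Z → Y → ℝ)
    (p : Z → ℝ) : ℝ :=
  (∑ x, n x * Real.log (1 + ∑ z, Real.exp (α x z + p z))) +
    ∑ y, m y * Real.log (1 + ∑ z, Real.exp (γ z y - p z))

/-- Generalized entropy of a flow in the Logit specification (note that in Lean
`0 * Real.log 0 = 0`, which implements the convention `0 · log 0 = 0`). -/
noncomputable def entropyE (n : X → ℝ) (m : Y → ℝ)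
    (μs : X → Z → ℝ) (μd : Z → Y → ℝ) : ℝ :=
  (∑ x, ((∑ z, μs x z * Real.log (μs x z / n x)) +
      (n x - ∑ z, μs x z) * Real.log ((n x - ∑ z, μs x z) / n x))) +
    ∑ y, ((∑ z, μd z y * Real.log (μd z y / m y)) +
      (m y - ∑ z, μd z y) * Real.log ((m y - ∑ z, μd z y) / m y))

/-- The entropic social welfare of a flow in the Logit specification. -/
noncomputable def entWelfare (n : X → ℝ) (m : Y → ℝ) (α : X → Z → ℝ) (γ : Z → Y → ℝ)
    (μs : X → Z → ℝ) (μd : Z → Y → ℝ) : ℝ :=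
  (∑ x, ∑ z, μs x z * α x z) + (∑ z, ∑ y, μd z y * γ z y) - entropyE n m μs μd

open Filter

section LogSumExp

variable {ι : Type*} [Fintype ι]

noncomputable def softmax (a : ι → ℝ) (i : ι) : ℝ := exp (a i) / ∑ j, exp (a j)

lemma sum_exp_pos [Nonempty ι] (a : ι → ℝ) : 0 < ∑ i, exp (a i) :=
  sum_pos (fun i _ => exp_pos (a i)) univ_nonempty

lemma softmax_nonneg (a : ι → ℝ) (i : ι) : 0 ≤ softmax a i :=
  div_nonneg (exp_pos _).le (sum_nonneg fun _ _ => (exp_pos _).le)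

lemma sum_softmax [Nonempty ι] (a : ι → ℝ) : ∑ i, softmax a i = 1 := by
  simp only [softmax, ← sum_div, div_self (sum_exp_pos a).ne']

lemma log_softmax [Nonempty ι] (a : ι → ℝ) (i : ι) :
    log (softmax a i) = a i - log (∑ j, exp (a j)) := by
  rw [softmax, log_div (exp_ne_zero _) (sum_exp_pos a).ne', log_exp]

lemma le_log_sum_exp (a : ι → ℝ) (i : ι) : a i ≤ log (∑ j, exp (a j)) := by
  have : Nonempty ι := ⟨i⟩
  rw [le_log_iff_exp_le (sum_exp_pos a)]
  exact single_le_sum (fun j _ => (exp_pos (a j)).le) (mem_univ i)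

lemma hasDerivAt_log_sum_exp_add_mul [Nonempty ι] (a v : ι → ℝ) :
    HasDerivAt (fun s => log (∑ i, exp (a i + s * v i))) (∑ i, softmax a i * v i) 0 := by
  have hsum : HasDerivAt (fun s => ∑ i, exp (a i + s * v i)) (∑ i, exp (a i) * v i) 0 := by
    refine HasDerivAt.fun_sum fun i _ => ?_
    simpa using ((hasDerivAt_mul_const (v i) (x := 0)).const_add (a i)).exp
  convert hsum.log (by simpa using (sum_exp_pos a).ne') using 1
  simp only [zero_mul, add_zero, softmax, div_mul_eq_mul_div, sum_div]

noncomputable def entropicSurplus (N : ℝ) (a μ : ι → ℝ) : ℝ :=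
  ∑ i, μ i * (a i - log (μ i / N))

lemma mul_sub_log_div_le {N q μ : ℝ} (hN : 0 < N) (hq : 0 < q) (hμ : 0 ≤ μ) :
    μ * (log q - log (μ / N)) ≤ N * q - μ := by
  rcases hμ.eq_or_lt with rfl | hμ
  · simpa using mul_nonneg hN.le hq.le
  have hlog : log q - log (μ / N) = log (N * q / μ) := by
    rw [← log_div hq.ne' (by positivity)]
    congr 1
    field_simp
  calc μ * (log q - log (μ / N)) ≤ μ * (N * q / μ - 1) := by
        rw [hlog]
        exact mul_le_mul_of_nonneg_left (log_le_sub_one_of_pos (by positivity)) hμ.le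
    _ = N * q - μ := by field_simp

/-- Gibbs' variational inequality. -/
theorem entropicSurplus_le [Nonempty ι] {N : ℝ} (hN : 0 < N) (a : ι → ℝ) {μ : ι → ℝ}
    (hμ : ∀ i, 0 ≤ μ i) (hsum : ∑ i, μ i = N) :
    entropicSurplus N a μ ≤ N * log (∑ i, exp (a i)) := by
  set L := log (∑ i, exp (a i))
  have hsplit : entropicSurplus N a μ =
      ∑ i, μ i * (log (softmax a i) - log (μ i / N)) + (∑ i, μ i) * L := by
    simp only [entropicSurplus, log_softmax, sum_mul, ← sum_add_distrib]
    exact sum_congr rfl fun i _ => by ring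
  have hterm : ∀ i, μ i * (log (softmax a i) - log (μ i / N)) ≤ N * softmax a i - μ i :=
    fun i => mul_sub_log_div_le hN (div_pos (exp_pos _) (sum_exp_pos a)) (hμ i)
  calc entropicSurplus N a μ
      ≤ ∑ i, (N * softmax a i - μ i) + (∑ i, μ i) * L := by
        rw [hsplit]
        gcongr with i
        exact hterm i
    _ = N * L := by rw [sum_sub_distrib, ← mul_sum, sum_softmax, hsum]; ring

theorem entropicSurplus_softmax [Nonempty ι] {N : ℝ} (hN : N ≠ 0) (a : ι → ℝ) :
    entropicSurplus N a (fun i => N * softmax a i) = N * log (∑ i, exp (a i)) := by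
  simp only [entropicSurplus, mul_div_cancel_left₀ _ hN, log_softmax, sub_sub_cancel,
    ← sum_mul, ← mul_sum, sum_softmax, mul_one]

end LogSumExp

section OutsideOption

variable {ι : Type*}

/-- The outside option `none` (non-participation) has payoff `0`. -/
def outsidePayoff (a : ι → ℝ) : Option ι → ℝ := fun o => o.elim 0 a

lemma outsidePayoff_add_mul (a v : ι → ℝ) (s : ℝ) :
    outsidePayoff (fun i => a i + s * v i) =
      fun o => outsidePayoff a o + s * outsidePayoff v o := by
  funext o
  cases o <;> simp [outsidePayoff]

variable [Fintype ι]

/-- `none` carries the non-participants, the paper's `μ_{x0} = N - ∑ μ`. -/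
def outsideFlow (N : ℝ) (μ : ι → ℝ) : Option ι → ℝ := fun o => o.elim (N - ∑ i, μ i) μ

lemma sum_exp_outsidePayoff (a : ι → ℝ) :
    ∑ o, exp (outsidePayoff a o) = 1 + ∑ i, exp (a i) := by
  simp [outsidePayoff, Fintype.sum_option]

lemma sum_mul_outsidePayoff (f : Option ι → ℝ) (v : ι → ℝ) :
    ∑ o, f o * outsidePayoff v o = ∑ i, f (some i) * v i := by
  simp [outsidePayoff, Fintype.sum_option]

lemma sum_outsideFlow (N : ℝ) (μ : ι → ℝ) : ∑ o, outsideFlow N μ o = N := by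
  simp [outsideFlow, Fintype.sum_option]

lemma outsideFlow_nonneg {N : ℝ} {μ : ι → ℝ} (hμ : ∀ i, 0 ≤ μ i) (hle : ∑ i, μ i ≤ N) :
    ∀ o, 0 ≤ outsideFlow N μ o
  | none => sub_nonneg.2 hle
  | some i => hμ i

lemma entropicSurplus_outside (N : ℝ) (a μ : ι → ℝ) :
    entropicSurplus N (outsidePayoff a) (outsideFlow N μ) =
      ∑ i, μ i * a i - ((∑ i, μ i * log (μ i / N)) +
        (N - ∑ i, μ i) * log ((N - ∑ i, μ i) / N)) := by
  simp only [entropicSurplus, outsidePayoff, outsideFlow, Fintype.sum_option, Option.elim,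
    mul_sub, sum_sub_distrib]
  ring

noncomputable def logitFlow (N : ℝ) (a : ι → ℝ) (i : ι) : ℝ :=
  N * softmax (outsidePayoff a) (some i)

lemma outsideFlow_logitFlow (N : ℝ) (a : ι → ℝ) :
    outsideFlow N (logitFlow N a) = fun o => N * softmax (outsidePayoff a) o := by
  funext o
  cases o with
  | some i => rfl
  | none =>
    have h := sum_softmax (outsidePayoff a)
    rw [Fintype.sum_option] at h
    simp only [outsideFlow, logitFlow, Option.elim, ← mul_sum]
    linear_combination -N * h

lemma logitFlow_nonneg {N : ℝ} (hN : 0 ≤ N) (a : ι → ℝ) (i : ι) : 0 ≤ logitFlow N a i :=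
  mul_nonneg hN (softmax_nonneg _ _)

lemma sum_logitFlow_le {N : ℝ} (hN : 0 ≤ N) (a : ι → ℝ) : ∑ i, logitFlow N a i ≤ N := by
  have h := congrFun (outsideFlow_logitFlow N a) none
  simp only [outsideFlow, Option.elim] at h
  nlinarith [softmax_nonneg (outsidePayoff a) none]

end OutsideOption

section Market

omit [Nonempty X] [Nonempty Y] [Nonempty Z] in
lemma Wlogit_eq_sum_log_sum_exp (n : X → ℝ) (m : Y → ℝ) (α : X → Z → ℝ) (γ : Z → Y → ℝ)
    (p : Z → ℝ) :
    Wlogit n m α γ p =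
      ∑ x, n x * log (∑ o, exp (outsidePayoff (fun z => α x z + p z) o)) +
        ∑ y, m y * log (∑ o, exp (outsidePayoff (fun z => γ z y - p z) o)) := by
  simp only [Wlogit, sum_exp_outsidePayoff]

omit [Nonempty X] [Nonempty Y] [Nonempty Z] in
/-- Under market clearing the payments at any prices `p` cancel between the two sides. -/
lemma entWelfare_eq_sum_entropicSurplus (n : X → ℝ) (m : Y → ℝ) (α : X → Z → ℝ)
    (γ : Z → Y → ℝ) {μs : X → Z → ℝ} {μd : Z → Y → ℝ} (hclear : ∀ z, ∑ x, μs x z = ∑ y, μd z y)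
    (p : Z → ℝ) :
    entWelfare n m α γ μs μd =
      ∑ x, entropicSurplus (n x) (outsidePayoff (fun z => α x z + p z)) (outsideFlow (n x) (μs x)) +
        ∑ y, entropicSurplus (m y) (outsidePayoff (fun z => γ z y - p z))
          (outsideFlow (m y) (fun z => μd z y)) := by
  have hpay : ∑ x, ∑ z, μs x z * p z = ∑ y, ∑ z, μd z y * p z := by
    simp only [sum_comm (γ := X), sum_comm (γ := Y), ← sum_mul, hclear]
  have hγ : ∑ z, ∑ y, μd z y * γ z y = ∑ y, ∑ z, μd z y * γ z y := sum_comm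
  simp only [entropicSurplus_outside, mul_add, mul_sub, sum_add_distrib, sum_sub_distrib,
    entWelfare, entropyE, hγ]
  linarith

omit [Nonempty X] [Nonempty Y] [Nonempty Z] in
theorem entWelfare_le_Wlogit {n : X → ℝ} {m : Y → ℝ} (hn : ∀ x, 0 < n x) (hm : ∀ y, 0 < m y)
    (α : X → Z → ℝ) (γ : Z → Y → ℝ) {μs : X → Z → ℝ} {μd : Z → Y → ℝ}
    (hf : FeasibleFlow n m μs μd) (p : Z → ℝ) :
    entWelfare n m α γ μs μd ≤ Wlogit n m α γ p := by
  obtain ⟨hs0, hd0, hsle, hdle, hclear⟩ := hf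
  rw [entWelfare_eq_sum_entropicSurplus n m α γ hclear p, Wlogit_eq_sum_log_sum_exp]
  gcongr with x _ y _
  · exact entropicSurplus_le (hn x) _ (outsideFlow_nonneg (hs0 x) (hsle x)) (sum_outsideFlow _ _)
  · exact entropicSurplus_le (hm y) _ (outsideFlow_nonneg (hd0 · y) (hdle y)) (sum_outsideFlow _ _)

omit [Nonempty X] [Nonempty Y] [Nonempty Z] in
lemma continuous_Wlogit (n : X → ℝ) (m : Y → ℝ) (α : X → Z → ℝ) (γ : Z → Y → ℝ) :
    Continuous (Wlogit n m α γ) := by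
  unfold Wlogit
  fun_prop (disch := intro; positivity)

omit [Nonempty X] [Nonempty Y] [Nonempty Z] in
lemma Wlogit_lower_bounds {n : X → ℝ} {m : Y → ℝ} (hn : ∀ x, 0 ≤ n x) (hm : ∀ y, 0 ≤ m y)
    (α : X → Z → ℝ) (γ : Z → Y → ℝ) (p : Z → ℝ) :
    0 ≤ Wlogit n m α γ p ∧ (∀ x z, n x * (α x z + p z) ≤ Wlogit n m α γ p) ∧
      ∀ y z, m y * (γ z y - p z) ≤ Wlogit n m α γ p := by
  rw [Wlogit_eq_sum_log_sum_exp]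
  set P := fun x => n x * log (∑ o, exp (outsidePayoff (fun z => α x z + p z) o))
  set C := fun y => m y * log (∑ o, exp (outsidePayoff (fun z => γ z y - p z) o))
  have hP : ∀ x o, n x * outsidePayoff (fun z => α x z + p z) o ≤ P x :=
    fun x o => mul_le_mul_of_nonneg_left (le_log_sum_exp _ o) (hn x)
  have hC : ∀ y o, m y * outsidePayoff (fun z => γ z y - p z) o ≤ C y :=
    fun y o => mul_le_mul_of_nonneg_left (le_log_sum_exp _ o) (hm y)
  have hP0 : ∀ x, 0 ≤ P x := fun x => by simpa [outsidePayoff] using hP x none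
  have hC0 : ∀ y, 0 ≤ C y := fun y => by simpa [outsidePayoff] using hC y none
  have hsumP := sum_nonneg fun x (_ : x ∈ univ) => hP0 x
  have hsumC := sum_nonneg fun y (_ : y ∈ univ) => hC0 y
  refine ⟨add_nonneg hsumP hsumC, fun x z => ?_, fun y z => ?_⟩
  · calc n x * (α x z + p z) ≤ P x := hP x (some z)
      _ ≤ ∑ x, P x := single_le_sum (fun x _ => hP0 x) (mem_univ x)
      _ ≤ _ := le_add_of_nonneg_right hsumC
  · calc m y * (γ z y - p z) ≤ C y := hC y (some z)
      _ ≤ ∑ y, C y := single_le_sum (fun y _ => hC0 y) (mem_univ y)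
      _ ≤ _ := le_add_of_nonneg_left hsumP

omit [Nonempty Z] in
lemma tendsto_Wlogit_cocompact {n : X → ℝ} {m : Y → ℝ} (hn : ∀ x, 0 < n x) (hm : ∀ y, 0 < m y)
    (α : X → Z → ℝ) (γ : Z → Y → ℝ) :
    Tendsto (Wlogit n m α γ) (cocompact (Z → ℝ)) atTop := by
  obtain ⟨x₀⟩ := ‹Nonempty X›
  obtain ⟨y₀⟩ := ‹Nonempty Y›
  set c := (n x₀)⁻¹ + (m y₀)⁻¹
  set K := ∑ z, (|α x₀ z| + |γ z y₀|)
  have hc : 0 < c := by have := hn x₀; have := hm y₀; positivity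
  have hbound : ∀ p, ‖p‖ ≤ c * Wlogit n m α γ p + K := by
    intro p
    obtain ⟨h0, hprod, hcons⟩ := Wlogit_lower_bounds (hn · |>.le) (hm · |>.le) α γ p
    have hK0 : 0 ≤ K := sum_nonneg fun z _ => by positivity
    refine (pi_norm_le_iff_of_nonneg (by positivity)).2 fun z => ?_
    have hα : α x₀ z + p z ≤ (n x₀)⁻¹ * Wlogit n m α γ p := by
      rw [← div_eq_inv_mul, le_div_iff₀' (hn x₀)]; exact hprod x₀ z
    have hγ : γ z y₀ - p z ≤ (m y₀)⁻¹ * Wlogit n m α γ p := by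
      rw [← div_eq_inv_mul, le_div_iff₀' (hm y₀)]; exact hcons y₀ z
    have hKz : |α x₀ z| + |γ z y₀| ≤ K :=
      single_le_sum (f := fun z => |α x₀ z| + |γ z y₀|) (fun _ _ => by positivity) (mem_univ z)
    have : 0 ≤ (n x₀)⁻¹ * Wlogit n m α γ p := mul_nonneg (inv_pos.2 (hn x₀)).le h0
    have : 0 ≤ (m y₀)⁻¹ * Wlogit n m α γ p := mul_nonneg (inv_pos.2 (hm y₀)).le h0
    have hcW : c * Wlogit n m α γ p = (n x₀)⁻¹ * Wlogit n m α γ p + (m y₀)⁻¹ * Wlogit n m α γ p :=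
      add_mul _ _ _
    rw [Real.norm_eq_abs, abs_le, hcW]
    constructor <;> linarith [neg_abs_le (α x₀ z), neg_abs_le (γ z y₀), abs_nonneg (α x₀ z),
      abs_nonneg (γ z y₀)]
  refine tendsto_atTop_mono (fun p => ?_)
    ((tendsto_atTop_add_const_right _ (-K) tendsto_norm_cocompact_atTop).atTop_div_const hc)
  rw [div_le_iff₀ hc]
  linarith [hbound p]

omit [Nonempty Z] in
lemma exists_forall_Wlogit_le {n : X → ℝ} {m : Y → ℝ} (hn : ∀ x, 0 < n x) (hm : ∀ y, 0 < m y)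
    (α : X → Z → ℝ) (γ : Z → Y → ℝ) : ∃ p, ∀ q, Wlogit n m α γ p ≤ Wlogit n m α γ q :=
  (continuous_Wlogit n m α γ).exists_forall_le (tendsto_Wlogit_cocompact hn hm α γ)

noncomputable def logitSupply (n : X → ℝ) (α : X → Z → ℝ) (p : Z → ℝ) (x : X) : Z → ℝ :=
  logitFlow (n x) (fun z => α x z + p z)

noncomputable def logitDemand (m : Y → ℝ) (γ : Z → Y → ℝ) (p : Z → ℝ) (z : Z) (y : Y) : ℝ :=
  logitFlow (m y) (fun z => γ z y - p z) z

omit [Nonempty X] [Nonempty Y] [Nonempty Z] in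
lemma hasDerivAt_Wlogit_add_smul (n : X → ℝ) (m : Y → ℝ) (α : X → Z → ℝ) (γ : Z → Y → ℝ)
    (p v : Z → ℝ) :
    HasDerivAt (fun s : ℝ => Wlogit n m α γ (p + s • v))
      (∑ z, (∑ x, logitSupply n α p x z - ∑ y, logitDemand m γ p z y) * v z) 0 := by
  have hline : (fun s : ℝ => Wlogit n m α γ (p + s • v)) = fun s =>
      ∑ x, n x * log (∑ o, exp (outsidePayoff (fun z => α x z + p z) o +
        s * outsidePayoff v o)) +
      ∑ y, m y * log (∑ o, exp (outsidePayoff (fun z => γ z y - p z) o +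
        s * outsidePayoff (-v) o)) := by
    funext s
    have hA : ∀ x, (fun z => α x z + (p + s • v) z) = fun z => (α x z + p z) + s * v z := by
      intro x; funext z; simp only [Pi.add_apply, Pi.smul_apply, smul_eq_mul]; ring
    have hB : ∀ y, (fun z => γ z y - (p + s • v) z) = fun z => (γ z y - p z) + s * (-v) z := by
      intro y; funext z; simp only [Pi.add_apply, Pi.smul_apply, Pi.neg_apply, smul_eq_mul]; ring
    simp only [Wlogit_eq_sum_log_sum_exp, hA, hB, outsidePayoff_add_mul]
  rw [hline]
  refine ((HasDerivAt.fun_sum fun x _ => (hasDerivAt_log_sum_exp_add_mul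
      (outsidePayoff (fun z => α x z + p z)) (outsidePayoff v)).const_mul (n x)).add
    (HasDerivAt.fun_sum fun y _ => (hasDerivAt_log_sum_exp_add_mul
      (outsidePayoff (fun z => γ z y - p z)) (outsidePayoff (-v))).const_mul (m y))).congr_deriv ?_
  simp only [sum_mul_outsidePayoff, logitSupply, logitDemand, logitFlow, Pi.neg_apply, mul_neg,
    sum_neg_distrib, ← sub_eq_add_neg, mul_sum, sub_mul, sum_mul, sum_sub_distrib, mul_assoc]
  rw [sum_comm (γ := X), sum_comm (γ := Y)]

omit [Nonempty X] [Nonempty Y] [Nonempty Z] in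
lemma logitSupply_clears_logitDemand_of_forall_le {n : X → ℝ} {m : Y → ℝ} {α : X → Z → ℝ}
    {γ : Z → Y → ℝ} {p : Z → ℝ} (hp : ∀ q, Wlogit n m α γ p ≤ Wlogit n m α γ q) (z : Z) :
    ∑ x, logitSupply n α p x z = ∑ y, logitDemand m γ p z y := by
  classical
  have hmin : IsLocalMin (fun s : ℝ => Wlogit n m α γ (p + s • Pi.single z 1)) 0 :=
    Eventually.of_forall fun s => by simpa using hp (p + s • Pi.single z 1)
  simpa [Pi.single_apply, sub_eq_zero] using
    hmin.hasDerivAt_eq_zero (hasDerivAt_Wlogit_add_smul n m α γ p (Pi.single z 1))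

omit [Nonempty X] [Nonempty Y] [Nonempty Z] in
lemma feasibleFlow_logitSupply_logitDemand {n : X → ℝ} {m : Y → ℝ} (hn : ∀ x, 0 ≤ n x)
    (hm : ∀ y, 0 ≤ m y) {α : X → Z → ℝ} {γ : Z → Y → ℝ} {p : Z → ℝ}
    (hclear : ∀ z, ∑ x, logitSupply n α p x z = ∑ y, logitDemand m γ p z y) :
    FeasibleFlow n m (logitSupply n α p) (logitDemand m γ p) :=
  ⟨fun x => logitFlow_nonneg (hn x) _, fun _ y => logitFlow_nonneg (hm y) _ _,
    fun x => sum_logitFlow_le (hn x) _, fun y => sum_logitFlow_le (hm y) _, hclear⟩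

omit [Nonempty X] [Nonempty Y] [Nonempty Z] in
lemma entWelfare_logitSupply_logitDemand {n : X → ℝ} {m : Y → ℝ} (hn : ∀ x, n x ≠ 0)
    (hm : ∀ y, m y ≠ 0) {α : X → Z → ℝ} {γ : Z → Y → ℝ} {p : Z → ℝ}
    (hclear : ∀ z, ∑ x, logitSupply n α p x z = ∑ y, logitDemand m γ p z y) :
    entWelfare n m α γ (logitSupply n α p) (logitDemand m γ p) = Wlogit n m α γ p := by
  rw [entWelfare_eq_sum_entropicSurplus n m α γ hclear p, Wlogit_eq_sum_log_sum_exp]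
  simp only [logitSupply, logitDemand, outsideFlow_logitFlow, entropicSurplus_softmax (hn _),
    entropicSurplus_softmax (hm _)]

end Market

/-- Theorem 3(i)-(ii) in the Logit case: entropic social-welfare duality. -/
theorem entropic_welfare_duality (n : X → ℝ) (m : Y → ℝ)
    (hn : ∀ x, 0 < n x) (hm : ∀ y, 0 < m y) (α : X → Z → ℝ) (γ : Z → Y → ℝ) :
    sInf {w : ℝ | ∃ p : Z → ℝ, w = Wlogit n m α γ p} =
      sSup {s : ℝ | ∃ (μs : X → Z → ℝ) (μd : Z → Y → ℝ), FeasibleFlow n m μs μd ∧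
        s = entWelfare n m α γ μs μd} := by
  obtain ⟨p, hp⟩ := exists_forall_Wlogit_le hn hm α γ
  have hclear := logitSupply_clears_logitDemand_of_forall_le hp
  have hleast : IsLeast {w : ℝ | ∃ p : Z → ℝ, w = Wlogit n m α γ p} (Wlogit n m α γ p) :=
    ⟨⟨p, rfl⟩, by rintro _ ⟨q, rfl⟩; exact hp q⟩
  have hgreatest : IsGreatest {s : ℝ | ∃ (μs : X → Z → ℝ) (μd : Z → Y → ℝ),
      FeasibleFlow n m μs μd ∧ s = entWelfare n m α γ μs μd} (Wlogit n m α γ p) :=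
    ⟨⟨_, _, feasibleFlow_logitSupply_logitDemand (hn · |>.le) (hm · |>.le) hclear,
        (entWelfare_logitSupply_logitDemand (hn · |>.ne') (hm · |>.ne') hclear).symm⟩,
      by rintro _ ⟨μs, μd, hf, rfl⟩; exact entWelfare_le_Wlogit hn hm α γ hf p⟩
  rw [hleast.csInf_eq, hgreatest.csSup_eq]
end
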